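/- arXiv:2404.14679 — 9 statements merged into one kernel-verified Lean document; each statement's English description precedes it below -/
import Mathlib

section
/- Let D be a finitely supported probability distribution over valuations on m items, let α ≥ 1, let p be an item pricing, let S ⊆ Fin m with p_j > 0 for every j ∈ S, and fix a selection rule A. Suppose that for every T ⊆ S there exists an item pricing q^T such that: (a) q^T_j ≥ p_j / α for every j ∈ T; and (b) E_{v∼D}[ Rev(v|T, q^T) ] ≥ (1/α) · E_{v∼D}[ p( A(v, p, Fin m) ∩ T ) ]. Then there exist nonnegative weights (λ_T)_{T ⊆ S} with ∑_{T ⊆ S} λ_T = 1 such that: (i) for every item j, ∑_{T ⊆ S} λ_T · Pr_{v∼D}[ j ∈ A(v, q^T, T) ] ≤ Pr_{v∼D}[ j ∈ A(v, p, Fin m) ]; and (ii) ∑_{T ⊆ S} λ_T · E_{v∼D}[ Rev(v|T, q^T) ] ≥ (1 − 1/e) · (1/α) · E_{v∼D}[ p( A(v, p, Fin m) ∩ S ) ]. -/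
open Finset

/-- The total price of a bundle of items under an item pricing `p`. -/
def priceOf {m : ℕ} (p : Fin m → ℝ) (T : Finset (Fin m)) : ℝ := ∑ j ∈ T, p j

/-- A valuation assigns `0` to the empty set and is nonnegative. -/
def IsValuation {m : ℕ} (v : Finset (Fin m) → ℝ) : Prop :=
  v ∅ = 0 ∧ ∀ T, 0 ≤ v T

/-- `T` is a demanded bundle for valuation `v` at pricing `q` with available set `S`:
it maximizes utility `v(T) - q(T)` among subsets of `S`. -/
def IsDemanded {m : ℕ} (v : Finset (Fin m) → ℝ) (q : Fin m → ℝ)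
    (S T : Finset (Fin m)) : Prop :=
  T ⊆ S ∧ ∀ T' ⊆ S, v T' - priceOf q T' ≤ v T - priceOf q T

/-- The revenue `Rev(v|S, q)`: the maximum price of a demanded bundle (the buyer breaks
ties in favor of a most expensive demanded bundle). -/
noncomputable def BRev {m : ℕ} (v : Finset (Fin m) → ℝ) (q : Fin m → ℝ)
    (S : Finset (Fin m)) : ℝ :=
  sSup {r : ℝ | ∃ T, IsDemanded v q S T ∧ r = priceOf q T}

/-- A selection rule assigns to every triple `(v, q, S)` a demanded bundle whose price
realizes `Rev(v|S, q)`. -/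
def IsSelRule {m : ℕ}
    (A : (Finset (Fin m) → ℝ) → (Fin m → ℝ) → Finset (Fin m) → Finset (Fin m)) : Prop :=
  ∀ v q S, IsDemanded v q S (A v q S) ∧ priceOf q (A v q S) = BRev v q S

/-- A finitely supported probability distribution, given by a finite list of atoms. -/
structure FinDist (α : Type*) where
  card : ℕ
  val : Fin card → α
  prob : Fin card → ℝ
  prob_nonneg : ∀ i, 0 ≤ prob i
  prob_sum : ∑ i : Fin card, prob i = 1

/-!
Write `y_j = Pr[j ∈ A(v, p, [m])]`, `x_T` for the allocation vector of `(q^T, T)` and `R_T` for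
its expected revenue. The claim is that the convex hull of the points `(x_T, R_T)`, `T ⊆ S`,
meets `{z | z.1 ≤ y, z.2 ≥ (1 - 1/e) W}` with `W = ∑_{j ∈ S} p_j y_j / α`. Otherwise a separating
functional yields item prices `μ ≥ 0` and a level `ν` with `R_T ≤ ν + μ · x_T` for every `T ⊆ S`
but `(1 - 1/e) W > ν + μ · y`. On the threshold set `T_θ = {j ∈ S | α μ_j ≤ θ p_j}` the revenue
condition (b) and the price condition (a) turn this certificate into
`(1 - θ) ∑_{j ∈ T_θ} p_j y_j / α ≤ ν`, and integrating over `θ ∈ [0, 1 - 1/e]`, where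
`∫ dθ / (1 - θ) = 1`, gives the contradiction.
-/

open Set MeasureTheory intervalIntegral

lemma mul_sub_le_integral_indicator_Ici {a b c : ℝ} (hb : 0 ≤ b) (hc : 0 ≤ c) (ha : 0 ≤ a) :
    a * (b - c) ≤ ∫ θ in 0..b, (Ici c).indicator (fun _ => a) θ := by
  rw [integral_of_le hb, MeasureTheory.integral_indicator measurableSet_Ici,
    Measure.restrict_restrict measurableSet_Ici, setIntegral_const, smul_eq_mul, mul_comm]
  have hsub : Ioc c b ⊆ Ici c ∩ Ioc 0 b := fun θ hθ => ⟨hθ.1.le, hc.trans_lt hθ.1, hθ.2⟩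
  have := measureReal_mono (μ := volume) hsub (measure_inter_lt_top_of_right_ne_top (by simp)).ne
  rw [Real.volume_real_Ioc] at this
  nlinarith [le_max_left (b - c) 0]

lemma integral_inv_one_sub {b : ℝ} (hb : b < 1) :
    ∫ θ in (0:ℝ)..b, (1 - θ)⁻¹ = -Real.log (1 - b) := by
  rw [integral_comp_sub_left (fun u : ℝ => u⁻¹) 1, integral_inv, sub_zero, one_div, Real.log_inv]
  exact notMem_uIcc_of_lt (sub_pos.2 hb) (by norm_num)

theorem one_sub_inv_exp_mul_sum_le {ι : Type*} (s : Finset ι) (a c : ι → ℝ) (ν : ℝ)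
    (ha : ∀ j ∈ s, 0 ≤ a j) (hc : ∀ j ∈ s, 0 ≤ c j)
    (h : ∀ θ, 0 ≤ θ → θ < 1 → (1 - θ) * ∑ j ∈ s with c j ≤ θ, a j ≤ ν) :
    (1 - 1 / Real.exp 1) * ∑ j ∈ s, a j ≤ ν + ∑ j ∈ s, c j * a j := by
  set b := 1 - 1 / Real.exp 1
  have hb0 : 0 ≤ b := sub_nonneg.2 ((div_le_one (Real.exp_pos 1)).2 (Real.one_le_exp zero_le_one))
  have hb1 : b < 1 := sub_lt_self 1 (by positivity)
  set f : ι → ℝ → ℝ := fun j => (Ici (c j)).indicator fun _ => a j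
  have hf : ∀ j, IntervalIntegrable (f j) volume 0 b := fun j =>
    intervalIntegrable_iff.2 ((integrableOn_const (by simp) (by simp)).indicator measurableSet_Ici)
  have hinv : IntervalIntegrable (fun θ => ν * (1 - θ)⁻¹) volume 0 b := by
    refine (continuousOn_const.mul
      ((continuousOn_const.sub continuousOn_id).inv₀ ?_)).intervalIntegrable
    intro θ hθ
    rw [uIcc_of_le hb0] at hθ
    exact sub_ne_zero.2 (hθ.2.trans_lt hb1).ne'
  have hpoint : ∀ θ ∈ Icc 0 b, ∑ j ∈ s, f j θ ≤ ν * (1 - θ)⁻¹ := by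
    intro θ hθ
    have h1 : 0 < 1 - θ := sub_pos.2 (hθ.2.trans_lt hb1)
    rw [← div_eq_mul_inv, le_div_iff₀ h1, mul_comm]
    simpa [f, indicator_apply, Finset.sum_filter] using h θ hθ.1 (hθ.2.trans_lt hb1)
  calc b * ∑ j ∈ s, a j = ∑ j ∈ s, a j * (b - c j) + ∑ j ∈ s, c j * a j := by
        rw [Finset.mul_sum, ← Finset.sum_add_distrib]
        exact Finset.sum_congr rfl fun j _ => by ring
    _ ≤ ∑ j ∈ s, (∫ θ in 0..b, f j θ) + ∑ j ∈ s, c j * a j := by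
        gcongr with j hj
        exact mul_sub_le_integral_indicator_Ici hb0 (hc j hj) (ha j hj)
    _ = (∫ θ in 0..b, ∑ j ∈ s, f j θ) + ∑ j ∈ s, c j * a j := by
        rw [integral_finsetSum fun j _ => hf j]
    _ ≤ (∫ θ in 0..b, ν * (1 - θ)⁻¹) + ∑ j ∈ s, c j * a j := by
        gcongr
        refine integral_mono_on hb0 ?_ hinv hpoint
        simpa only [Finset.sum_fn] using IntervalIntegrable.sum s fun j _ => hf j
    _ = ν + ∑ j ∈ s, c j * a j := by
        rw [intervalIntegral.integral_const_mul, integral_inv_one_sub hb1]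
        simp [b]

lemma LinearMap.nonneg_of_lt_map_add_smul {E : Type*} [AddCommGroup E] [Module ℝ E]
    (f : E →ₗ[ℝ] ℝ) {b d : E} {v : ℝ} (h : ∀ τ : ℝ, 0 ≤ τ → v < f (b + τ • d)) : 0 ≤ f d := by
  by_contra! hd
  have h0 : v < f b := by simpa using h 0 le_rfl
  have := h ((f b - v) / -f d) (div_nonneg (sub_nonneg.2 h0.le) (neg_nonneg.2 hd.le))
  rw [map_add, map_smul, smul_eq_mul, div_mul_eq_mul_div, div_neg,
    mul_div_cancel_right₀ _ hd.ne] at this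
  linarith

lemma LinearMap.exists_nonneg_coeffs_of_lt_on_Iic_prod_Ici {κ : Type*} [Fintype κ]
    (f : ((κ → ℝ) × ℝ) →ₗ[ℝ] ℝ) {y : κ → ℝ} {β v : ℝ}
    (hf : ∀ b ∈ Iic y ×ˢ Ici β, v < f b) :
    ∃ μ : κ → ℝ, 0 ≤ μ ∧ ∃ t : ℝ, 0 ≤ t ∧ ∀ z, f z = t * z.2 - ∑ j, μ j * z.1 j := by
  classical
  let e : κ → (κ → ℝ) × ℝ := fun j => (fun k => if j = k then 1 else 0, 0)
  refine ⟨fun j => -f (e j), fun j => ?_, f (0, 1), ?_, fun z => ?_⟩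
  · change 0 ≤ -f (e j)
    rw [← map_neg]
    refine f.nonneg_of_lt_map_add_smul (b := (y, β)) fun τ hτ => hf _ ⟨fun k => ?_, ?_⟩
    · simp only [e, Prod.smul_mk, Prod.fst_add, Prod.neg_mk, Pi.add_apply, Pi.neg_apply,
        Pi.smul_apply, smul_eq_mul]
      split_ifs <;> simp [hτ]
    · simp [e]
  · refine f.nonneg_of_lt_map_add_smul (b := (y, β)) fun τ hτ => hf _ ⟨?_, ?_⟩
    · simp
    · simpa using hτ
  · have hfst := LinearMap.pi_apply_eq_sum_univ (f.comp (LinearMap.inl ℝ _ ℝ)) z.1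
    have hsnd : f (0, z.2) = z.2 * f (0, 1) := by rw [← smul_eq_mul, ← map_smul]; simp
    rw [LinearMap.comp_apply, LinearMap.inl_apply] at hfst
    rw [show z = (z.1, 0) + (0, z.2) by simp, map_add, hfst, hsnd]
    simp [e, mul_comm, add_comm]

theorem exists_convex_weights_of_dual {ι κ : Type*} [Fintype κ] (s : Finset ι)
    (x : ι → κ → ℝ) (R : ι → ℝ) (y : κ → ℝ) (β : ℝ)
    (hfeas : ∃ i ∈ s, x i ≤ y)
    (hdual : ∀ μ : κ → ℝ, 0 ≤ μ → ∀ ν : ℝ,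
      (∀ i ∈ s, R i ≤ ν + ∑ j, μ j * x i j) → β ≤ ν + ∑ j, μ j * y j) :
    ∃ lam : ι → ℝ, (∀ i, 0 ≤ lam i) ∧ ∑ i ∈ s, lam i = 1 ∧
      (∀ j, ∑ i ∈ s, lam i * x i j ≤ y j) ∧ β ≤ ∑ i ∈ s, lam i * R i := by
  classical
  let P : s → (κ → ℝ) × ℝ := fun i => (x i, R i)
  let φ := Fintype.linearCombination ℝ P
  obtain ⟨_, ⟨w, hw, rfl⟩, hwB⟩ : (φ '' stdSimplex ℝ s ∩ Iic y ×ˢ Ici β).Nonempty := by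
    rw [← not_disjoint_iff_nonempty_inter]
    intro hdisj
    obtain ⟨f, u, v, hfK, huv, hfB⟩ := geometric_hahn_banach_compact_closed
      ((convex_stdSimplex ℝ s).linear_image φ)
      ((isCompact_stdSimplex ℝ s).image φ.continuous_of_finiteDimensional)
      ((convex_Iic y).prod (convex_Ici β)) (isClosed_Iic.prod isClosed_Ici) hdisj
    obtain ⟨μ, hμ, t, ht, hf⟩ :=
      (f : ((κ → ℝ) × ℝ) →ₗ[ℝ] ℝ).exists_nonneg_coeffs_of_lt_on_Iic_prod_Ici hfB
    simp only [ContinuousLinearMap.coe_coe] at hf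
    have hfP : ∀ i : s, t * R i - ∑ j, μ j * x i j < u := fun i => by
      simpa [P, φ, hf] using hfK (P i) ⟨_, single_mem_stdSimplex ℝ i, by simp [φ]⟩
    have hfy : v < t * β - ∑ j, μ j * y j := by simpa [hf] using hfB (y, β) ⟨le_refl y, le_refl β⟩
    rcases ht.eq_or_lt with rfl | ht
    · obtain ⟨i, hi, hxy⟩ := hfeas
      have : ∑ j, μ j * x i j ≤ ∑ j, μ j * y j :=
        Finset.sum_le_sum fun j _ => mul_le_mul_of_nonneg_left (hxy j) (hμ j)
      linarith [hfP ⟨i, hi⟩]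
    · have hscale : ∀ z : κ → ℝ, u / t + ∑ j, μ j / t * z j = (u + ∑ j, μ j * z j) / t :=
        fun z => by simp_rw [add_div, Finset.sum_div, div_mul_eq_mul_div]
      have := hdual (fun j => μ j / t) (fun j => div_nonneg (hμ j) ht.le) (u / t) fun i hi => by
        rw [hscale, le_div_iff₀ ht]
        linarith [hfP ⟨i, hi⟩]
      rw [hscale, le_div_iff₀ ht] at this
      linarith
  set lam : ι → ℝ := fun i => if h : i ∈ s then w ⟨i, h⟩ else 0
  have hsum : ∀ g : ι → ℝ, ∑ i ∈ s, lam i * g i = ∑ i : s, w i * g i := fun g => by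
    rw [← Finset.sum_coe_sort s]
    simp [lam]
  have hφ₁ : ∀ j, (φ w).1 j = ∑ i : s, w i * x i j := fun j => by
    simp [φ, P, Fintype.linearCombination_apply, Prod.fst_sum, Finset.sum_apply]
  have hφ₂ : (φ w).2 = ∑ i : s, w i * R i := by
    simp [φ, P, Fintype.linearCombination_apply, Prod.snd_sum]
  obtain ⟨hwy, hwβ⟩ := hwB
  refine ⟨lam, fun i => ?_, ?_, fun j => ?_, ?_⟩
  · by_cases hi : i ∈ s
    · simpa [lam, hi] using hw.1 ⟨i, hi⟩
    · simp [lam, hi]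
  · simpa only [Pi.one_apply, mul_one, hw.2] using hsum 1
  · rw [hsum, ← hφ₁]
    exact hwy j
  · rw [hsum, ← hφ₂]
    exact hwβ

theorem one_sub_inv_exp_mul_le_of_dual {κ : Type*} [Fintype κ]
    (S : Finset κ) (w y μ : κ → ℝ) (x : Finset κ → κ → ℝ) (R : Finset κ → ℝ) (ν : ℝ)
    (hw : ∀ j ∈ S, 0 < w j) (hy : 0 ≤ y) (hμ : 0 ≤ μ) (hx : ∀ T, 0 ≤ x T)
    (hx_supp : ∀ T, ∀ j ∉ T, x T j = 0)
    (hRy : ∀ T ⊆ S, ∑ j ∈ T, w j * y j ≤ R T)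
    (hRx : ∀ T ⊆ S, ∑ j ∈ T, w j * x T j ≤ R T)
    (hR : ∀ T ⊆ S, R T ≤ ν + ∑ j, μ j * x T j) :
    (1 - 1 / Real.exp 1) * ∑ j ∈ S, w j * y j ≤ ν + ∑ j, μ j * y j := by
  have hthreshold : ∀ θ, 0 ≤ θ → θ < 1 →
      (1 - θ) * ∑ j ∈ S with μ j / w j ≤ θ, w j * y j ≤ ν := by
    intro θ hθ0 hθ1
    set T := S.filter fun j => μ j / w j ≤ θ
    have hTS : T ⊆ S := Finset.filter_subset _ _
    have hμx : ∑ j, μ j * x T j ≤ θ * R T := calc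
      ∑ j, μ j * x T j = ∑ j ∈ T, μ j * x T j :=
        (Finset.sum_subset (Finset.subset_univ T) fun j _ hj => by simp [hx_supp T j hj]).symm
      _ ≤ ∑ j ∈ T, θ * (w j * x T j) := Finset.sum_le_sum fun j hj => by
        obtain ⟨hjS, hjθ⟩ := Finset.mem_filter.1 hj
        rw [← mul_assoc]
        exact mul_le_mul_of_nonneg_right ((div_le_iff₀ (hw j hjS)).1 hjθ) (hx T j)
      _ ≤ θ * R T := by rw [← Finset.mul_sum]; exact mul_le_mul_of_nonneg_left (hRx T hTS) hθ0
    have := mul_le_mul_of_nonneg_left (hRy T hTS) (sub_nonneg.2 hθ1.le)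
    linarith [hR T hTS]
  have hS : ∑ j ∈ S, μ j / w j * (w j * y j) = ∑ j ∈ S, μ j * y j :=
    Finset.sum_congr rfl fun j hj => by field_simp [(hw j hj).ne']
  calc (1 - 1 / Real.exp 1) * ∑ j ∈ S, w j * y j ≤ ν + ∑ j ∈ S, μ j * y j := by
        rw [← hS]
        exact one_sub_inv_exp_mul_sum_le S _ _ ν (fun j hj => mul_nonneg (hw j hj).le (hy j))
          (fun j hj => div_nonneg (hμ j) (hw j hj).le) hthreshold
    _ ≤ ν + ∑ j, μ j * y j := by
        gcongr
        · exact fun j _ _ => mul_nonneg (hμ j) (hy j)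
        · exact Finset.subset_univ S

namespace FinDist

variable {β : Type*} (D : FinDist β)

def expect (f : β → ℝ) : ℝ := ∑ a, D.prob a * f (D.val a)

lemma expect_mono {f g : β → ℝ} (h : ∀ v, f v ≤ g v) : D.expect f ≤ D.expect g :=
  Finset.sum_le_sum fun a _ => mul_le_mul_of_nonneg_left (h _) (D.prob_nonneg a)

lemma expect_nonneg {f : β → ℝ} (h : ∀ v, 0 ≤ f v) : 0 ≤ D.expect f :=
  Finset.sum_nonneg fun a _ => mul_nonneg (D.prob_nonneg a) (h _)

lemma expect_ite_nonneg (P : β → Prop) [DecidablePred P] :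
    0 ≤ D.expect fun v => if P v then 1 else 0 :=
  D.expect_nonneg fun v => by split_ifs <;> norm_num

lemma expect_eq_zero {f : β → ℝ} (h : ∀ v, f v = 0) : D.expect f = 0 :=
  Finset.sum_eq_zero fun a _ => by rw [h, mul_zero]

lemma expect_sum_mul {ι : Type*} (s : Finset ι) (c : ι → ℝ) (f : ι → β → ℝ) :
    D.expect (fun v => ∑ i ∈ s, c i * f i v) = ∑ i ∈ s, c i * D.expect (f i) := by
  simp only [expect, Finset.mul_sum]
  rw [Finset.sum_comm]
  exact Finset.sum_congr rfl fun i _ => Finset.sum_congr rfl fun a _ => by ring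

end FinDist

lemma priceOf_inter {m : ℕ} (w : Fin m → ℝ) (B T : Finset (Fin m)) :
    priceOf w (B ∩ T) = ∑ j ∈ T, w j * if j ∈ B then 1 else 0 := by
  simp [priceOf, Finset.inter_comm B T]

lemma FinDist.expect_priceOf_inter {β : Type*} {m : ℕ} (D : FinDist β)
    (B : β → Finset (Fin m)) (w : Fin m → ℝ) (T : Finset (Fin m)) :
    D.expect (fun v => priceOf w (B v ∩ T)) =
      ∑ j ∈ T, w j * D.expect (fun v => if j ∈ B v then 1 else 0) := by
  simp only [priceOf_inter]
  exact D.expect_sum_mul T w _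

lemma IsSelRule.priceOf_le_BRev {m : ℕ}
    {A : (Finset (Fin m) → ℝ) → (Fin m → ℝ) → Finset (Fin m) → Finset (Fin m)}
    (hA : IsSelRule A) (v : Finset (Fin m) → ℝ) (q w : Fin m → ℝ) (S : Finset (Fin m))
    (hw : ∀ j ∈ S, w j ≤ q j) : priceOf w (A v q S) ≤ BRev v q S :=
  (hA v q S).2 ▸ Finset.sum_le_sum fun j hj => hw j ((hA v q S).1.1 hj)

theorem rrs_implies_convex_hull_sampler_general
    (m : ℕ)
    (D : FinDist (Finset (Fin m) → ℝ))
    (α : ℝ) (hα : 1 ≤ α)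
    (p : Fin m → ℝ)
    (S : Finset (Fin m)) (hpS : ∀ j ∈ S, 0 < p j)
    (A : (Finset (Fin m) → ℝ) → (Fin m → ℝ) → Finset (Fin m) → Finset (Fin m))
    (hA : IsSelRule A)
    (q : Finset (Fin m) → (Fin m → ℝ))
    (hqa : ∀ T ∈ S.powerset, ∀ j ∈ T, p j / α ≤ q T j)
    (hqb : ∀ T ∈ S.powerset,
      (1 / α) * ∑ a, D.prob a * priceOf p (A (D.val a) p Finset.univ ∩ T) ≤
        ∑ a, D.prob a * BRev (D.val a) (q T) T) :
    ∃ lam : Finset (Fin m) → ℝ,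
      (∀ T, 0 ≤ lam T) ∧
      (∑ T ∈ S.powerset, lam T = 1) ∧
      (∀ j : Fin m,
        (∑ T ∈ S.powerset, lam T *
          ∑ a, D.prob a * (if j ∈ A (D.val a) (q T) T then (1:ℝ) else 0)) ≤
        ∑ a, D.prob a * (if j ∈ A (D.val a) p Finset.univ then (1:ℝ) else 0)) ∧
      ((1 - 1 / Real.exp 1) * (1 / α) *
          ∑ a, D.prob a * priceOf p (A (D.val a) p Finset.univ ∩ S) ≤
        ∑ T ∈ S.powerset, lam T * ∑ a, D.prob a * BRev (D.val a) (q T) T) := by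
  classical
  have hα0 : 0 < α := zero_lt_one.trans_le hα
  set y : Fin m → ℝ := fun j => D.expect fun v => if j ∈ A v p Finset.univ then 1 else 0
  set x : Finset (Fin m) → Fin m → ℝ :=
    fun T j => D.expect fun v => if j ∈ A v (q T) T then 1 else 0
  set R : Finset (Fin m) → ℝ := fun T => D.expect fun v => BRev v (q T) T
  have hx_supp : ∀ T, ∀ j ∉ T, x T j = 0 := fun T j hj =>
    D.expect_eq_zero fun v => if_neg fun h => hj ((hA v (q T) T).1.1 h)
  have hrev : ∀ T, ∑ j ∈ T, p j / α * y j =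
      1 / α * D.expect (fun v => priceOf p (A v p Finset.univ ∩ T)) := fun T => by
    rw [D.expect_priceOf_inter, Finset.mul_sum]
    exact Finset.sum_congr rfl fun j _ => by ring
  have hRy : ∀ T ⊆ S, ∑ j ∈ T, p j / α * y j ≤ R T := fun T hT =>
    (hrev T).trans_le (hqb T (Finset.mem_powerset.2 hT))
  have hRx : ∀ T ⊆ S, ∑ j ∈ T, p j / α * x T j ≤ R T := fun T hT => by
    rw [← D.expect_priceOf_inter]
    refine D.expect_mono fun v => ?_
    rw [Finset.inter_eq_left.2 (hA v (q T) T).1.1]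
    exact hA.priceOf_le_BRev v (q T) _ T (hqa T (Finset.mem_powerset.2 hT))
  refine exists_convex_weights_of_dual S.powerset x R y _
    ⟨∅, Finset.empty_mem_powerset S, fun j => ?_⟩ fun μ hμ ν hR => ?_
  · rw [hx_supp ∅ j (Finset.notMem_empty j)]
    exact D.expect_ite_nonneg _
  · have := one_sub_inv_exp_mul_le_of_dual S (fun j => p j / α) y μ x R ν
      (fun j hj => div_pos (hpS j hj) hα0) (fun j => D.expect_ite_nonneg _) hμ
      (fun T j => D.expect_ite_nonneg _) hx_supp hRy hRx
      (fun T hT => hR T (Finset.mem_powerset.2 hT))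
    rwa [hrev, ← mul_assoc] at this

/-- A revenue recovery scheme implies a convex-hull (contention
resolution) guarantee: given per-subset pricings `q^T` satisfying the RRS price and
revenue conditions, there is a distribution `λ` over subsets `T ⊆ S` whose induced random
pricing respects the per-item allocation of `p` and recovers a `(1 - 1/e)/α` fraction of
the revenue contribution of `S`. -/
theorem rrs_implies_convex_hull_sampler
    (m : ℕ) (hm : 1 ≤ m)
    (D : FinDist (Finset (Fin m) → ℝ))
    (hD : ∀ a, 0 < D.prob a → IsValuation (D.val a))
    (α : ℝ) (hα : 1 ≤ α)
    (p : Fin m → ℝ) (hp : ∀ j, 0 ≤ p j)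
    (S : Finset (Fin m)) (hpS : ∀ j ∈ S, 0 < p j)
    (A : (Finset (Fin m) → ℝ) → (Fin m → ℝ) → Finset (Fin m) → Finset (Fin m))
    (hA : IsSelRule A)
    (q : Finset (Fin m) → (Fin m → ℝ))
    (hq0 : ∀ T ∈ S.powerset, ∀ j, 0 ≤ q T j)
    (hqa : ∀ T ∈ S.powerset, ∀ j ∈ T, p j / α ≤ q T j)
    (hqb : ∀ T ∈ S.powerset,
      (1 / α) * ∑ a, D.prob a * priceOf p (A (D.val a) p Finset.univ ∩ T) ≤
        ∑ a, D.prob a * BRev (D.val a) (q T) T) :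
    ∃ lam : Finset (Fin m) → ℝ,
      (∀ T, 0 ≤ lam T) ∧
      (∑ T ∈ S.powerset, lam T = 1) ∧
      (∀ j : Fin m,
        (∑ T ∈ S.powerset, lam T *
          ∑ a, D.prob a * (if j ∈ A (D.val a) (q T) T then (1:ℝ) else 0)) ≤
        ∑ a, D.prob a * (if j ∈ A (D.val a) p Finset.univ then (1:ℝ) else 0)) ∧
      ((1 - 1 / Real.exp 1) * (1 / α) *
          ∑ a, D.prob a * priceOf p (A (D.val a) p Finset.univ ∩ S) ≤
        ∑ T ∈ S.powerset, lam T * ∑ a, D.prob a * BRev (D.val a) (q T) T) :=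
  rrs_implies_convex_hull_sampler_general m D α hα p S hpS A hA q hqa hqb
end

section
/- Let D be a finitely supported probability distribution over subadditive valuations on m items (v(T ∪ T') ≤ v(T) + v(T') for all T, T'), let S ⊆ Fin m be nonempty, let p be an item pricing with p_j > 0 for every j ∈ S, let Γ = (max_{j∈S} p_j)/(min_{j∈S} p_j), and fix a selection rule A. Then there exists a real number γ ∈ [1/2, m·Γ] such that the item pricing q = γ·p satisfies: (a) q_j ≥ p_j / 2 for every j; and (b) E_{v∼D}[ Rev(v|S, q) ] ≥ (1 / (2 · ln(2mΓ))) · E_{v∼D}[ p( A(v, p, Fin m) ∩ S ) ], where ln denotes the natural logarithm. -/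
/-!
Write `u(γ)` for the buyer's utility from a bundle demanded at prices `γ·p`. A bundle `T`
demanded at `γ` is still available at `γ' > γ`, so `u(γ) - u(γ') ≤ (γ' - γ)·p(T)`; along the
geometric grid `γ_k = r^k / 2` with `r^N = 2mΓ` this drop is `(r - 1)·Rev(v|S, γ_k p)`. On the
other hand `u(1/2) - u(mΓ) ≥ p(X)/2` for `X = A(v, p, Fin m) ∩ S`: subadditivity gives
`v(X) ≥ p(X)`, and a nonempty bundle demanded at `mΓ·p` costs at least `p(X)`. Summing, the
expected revenue at some grid point is at least `E[p(X)] / (2N(r - 1))`. Demand sets are closed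
in `γ`, so the expected revenue is upper semicontinuous and attains its maximum on `[1/2, mΓ]`;
finally `N(r - 1) → ln(2mΓ)` as `N → ∞`.
-/

open Finset

open Filter Topology

variable {m : ℕ}

lemma priceOf_nonneg {p : Fin m → ℝ} (hp : ∀ j, 0 ≤ p j) (T : Finset (Fin m)) :
    0 ≤ priceOf p T :=
  sum_nonneg fun j _ => hp j

lemma priceOf_const_mul (γ : ℝ) (p : Fin m → ℝ) (T : Finset (Fin m)) :
    priceOf (fun j => γ * p j) T = γ * priceOf p T :=
  (mul_sum T p γ).symm

lemma IsDemanded.priceOf_le_bRev {v : Finset (Fin m) → ℝ} {q : Fin m → ℝ}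
    {S T : Finset (Fin m)} (hT : IsDemanded v q S T) : priceOf q T ≤ BRev v q S :=
  le_csSup ((Set.finite_range (priceOf q)).bddAbove.mono <| by
    rintro _ ⟨T', -, rfl⟩; exact ⟨T', rfl⟩) ⟨T, hT, rfl⟩

lemma IsSelRule.bRev_const_mul
    {A : (Finset (Fin m) → ℝ) → (Fin m → ℝ) → Finset (Fin m) → Finset (Fin m)}
    (hA : IsSelRule A) (v : Finset (Fin m) → ℝ) (γ : ℝ) (p : Fin m → ℝ) (S : Finset (Fin m)) :
    BRev v (fun j => γ * p j) S = γ * priceOf p (A v (fun j => γ * p j) S) := by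
  rw [← (hA v _ S).2, priceOf_const_mul]

lemma IsDemanded.priceOf_inter_le {v : Finset (Fin m) → ℝ} {p : Fin m → ℝ}
    (hsub : ∀ T T', v (T ∪ T') ≤ v T + v T') {T : Finset (Fin m)} (hT : IsDemanded v p univ T)
    (S : Finset (Fin m)) : priceOf p (T ∩ S) ≤ v (T ∩ S) := by
  have hdrop := hT.2 (T \ S) (subset_univ _)
  have hsplit : v T ≤ v (T ∩ S) + v (T \ S) := by
    simpa only [show T ∩ S ∪ T \ S = T from sup_inf_sdiff T S] using hsub (T ∩ S) (T \ S)
  have hprice : priceOf p (T ∩ S) + priceOf p (T \ S) = priceOf p T :=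
    sum_inter_add_sum_sdiff T S p
  linarith

lemma priceOf_le_mul_priceOf {S : Finset (Fin m)} (hS : S.Nonempty) {p : Fin m → ℝ}
    (hpS : ∀ j ∈ S, 0 < p j) {X T : Finset (Fin m)} (hX : X ⊆ S) (hT : T ⊆ S)
    (hTne : T.Nonempty) :
    priceOf p X ≤ m * (S.sup' hS p / S.inf' hS p) * priceOf p T := by
  obtain ⟨j, hj⟩ := hTne
  have hmin : 0 < S.inf' hS p := (lt_inf'_iff hS).2 hpS
  have hmax : 0 ≤ S.sup' hS p := hmin.le.trans ((inf'_le p (hT hj)).trans (le_sup' p (hT hj)))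
  have hminT : S.inf' hS p ≤ priceOf p T :=
    (inf'_le p (hT hj)).trans (single_le_sum (fun i hi => (hpS i (hT hi)).le) hj)
  have hcard : (X.card : ℝ) ≤ m := by
    exact_mod_cast (card_le_univ X).trans_eq (Fintype.card_fin m)
  calc priceOf p X ≤ X.card • S.sup' hS p :=
        sum_le_card_nsmul X p _ fun i hi => le_sup' p (hX hi)
    _ ≤ m * S.sup' hS p := by rw [nsmul_eq_mul]; gcongr
    _ = m * (S.sup' hS p / S.inf' hS p) * S.inf' hS p := by field_simp
    _ ≤ m * (S.sup' hS p / S.inf' hS p) * priceOf p T := by gcongr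

lemma one_le_mul_sup'_div_inf' {S : Finset (Fin m)} (hS : S.Nonempty) {p : Fin m → ℝ}
    (hpS : ∀ j ∈ S, 0 < p j) : 1 ≤ m * (S.sup' hS p / S.inf' hS p) := by
  obtain ⟨j, hj⟩ := hS
  have hm : (1 : ℝ) ≤ m := by
    exact_mod_cast (card_pos.2 ⟨j, hj⟩).trans_le ((card_le_univ S).trans_eq (Fintype.card_fin m))
  have hratio : 1 ≤ S.sup' ⟨j, hj⟩ p / S.inf' ⟨j, hj⟩ p :=
    (one_le_div ((lt_inf'_iff _).2 hpS)).2 ((inf'_le p hj).trans (le_sup' p hj))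
  exact one_le_mul_of_one_le_of_one_le hm hratio

section Demand

variable {v : Finset (Fin m) → ℝ} {p : Fin m → ℝ} {S : Finset (Fin m)}

lemma utility_sub_utility_le_sum (γ : ℕ → ℝ) {T : ℕ → Finset (Fin m)}
    (hT : ∀ k, IsDemanded v (fun j => γ k * p j) S (T k)) (N : ℕ) :
    (v (T 0) - γ 0 * priceOf p (T 0)) - (v (T N) - γ N * priceOf p (T N)) ≤
      ∑ k ∈ range N, (γ (k + 1) - γ k) * priceOf p (T k) := by
  rw [← sum_range_sub' (fun k => v (T k) - γ k * priceOf p (T k))]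
  refine sum_le_sum fun k _ => ?_
  have hopt := (hT (k + 1)).2 (T k) (hT k).1
  simp only [priceOf_const_mul] at hopt
  linarith

lemma half_priceOf_le_utility_sub (hp : ∀ j, 0 ≤ p j) (hv0 : v ∅ = 0)
    {X T₀ T₁ : Finset (Fin m)} (hX : X ⊆ S) (hvX : priceOf p X ≤ v X) {γ₀ γ₁ : ℝ}
    (hγ₀ : γ₀ ≤ 1 / 2) (hγ₁ : 1 ≤ γ₁) (hXT : T₁.Nonempty → priceOf p X ≤ γ₁ * priceOf p T₁)
    (h₀ : IsDemanded v (fun j => γ₀ * p j) S T₀) (h₁ : IsDemanded v (fun j => γ₁ * p j) S T₁) :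
    priceOf p X / 2 ≤ (v T₀ - γ₀ * priceOf p T₀) - (v T₁ - γ₁ * priceOf p T₁) := by
  have hopt : ∀ T ⊆ S, v T - γ₀ * priceOf p T ≤ v T₀ - γ₀ * priceOf p T₀ := fun T hT => by
    simpa only [priceOf_const_mul] using h₀.2 T hT
  have hXnn := priceOf_nonneg hp X
  rcases T₁.eq_empty_or_nonempty with rfl | hne
  · have hXopt := hopt X hX
    rw [hv0, show priceOf p (∅ : Finset (Fin m)) = 0 from sum_empty]
    nlinarith [mul_nonneg (sub_nonneg.2 hγ₀) hXnn]
  · have hT₁opt := hopt T₁ h₁.1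
    have hXT₁ := hXT hne
    nlinarith [priceOf_nonneg hp T₁]

end Demand

section Selection

variable {A : (Finset (Fin m) → ℝ) → (Fin m → ℝ) → Finset (Fin m) → Finset (Fin m)}
  {p : Fin m → ℝ} {S : Finset (Fin m)} {b : ℝ}

lemma half_priceOf_le_sum_bRev (hA : IsSelRule A) (hp : ∀ j, 0 ≤ p j)
    {v : Finset (Fin m) → ℝ} (hv0 : v ∅ = 0) (hsub : ∀ T T', v (T ∪ T') ≤ v T + v T')
    (hb : 1 ≤ b) (hXT : ∀ X ⊆ S, ∀ T ⊆ S, T.Nonempty → priceOf p X ≤ b * priceOf p T)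
    {r : ℝ} {N : ℕ} (hrN : r ^ N = 2 * b) :
    priceOf p (A v p univ ∩ S) / 2 ≤
      (r - 1) * ∑ k ∈ range N, BRev v (fun j => r ^ k / 2 * p j) S := by
  set γ : ℕ → ℝ := fun k => r ^ k / 2
  have hT : ∀ k, IsDemanded v (fun j => γ k * p j) S (A v (fun j => γ k * p j) S) :=
    fun k => (hA v _ S).1
  have hγN : γ N = b := by simp only [γ, hrN]; ring
  calc priceOf p (A v p univ ∩ S) / 2
      ≤ _ := half_priceOf_le_utility_sub hp hv0 inter_subset_right
          ((hA v p univ).1.priceOf_inter_le hsub S) (by simp [γ]) (hγN ▸ hb)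
          (fun hne => (hXT _ inter_subset_right _ (hT N).1 hne).trans_eq (by rw [hγN]))
          (hT 0) (hT N)
    _ ≤ ∑ k ∈ range N, (γ (k + 1) - γ k) * priceOf p (A v (fun j => γ k * p j) S) :=
        utility_sub_utility_le_sum γ hT N
    _ = (r - 1) * ∑ k ∈ range N, BRev v (fun j => γ k * p j) S := by
        rw [mul_sum]
        refine sum_congr rfl fun k _ => ?_
        rw [hA.bRev_const_mul]
        simp only [γ, pow_succ]
        ring

end Selection

noncomputable def expectedBRev (D : FinDist (Finset (Fin m) → ℝ)) (q : Fin m → ℝ)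
    (S : Finset (Fin m)) : ℝ :=
  ∑ a, D.prob a * BRev (D.val a) q S

section Expectation

variable {A : (Finset (Fin m) → ℝ) → (Fin m → ℝ) → Finset (Fin m) → Finset (Fin m)}
  {p : Fin m → ℝ} {S : Finset (Fin m)} {D : FinDist (Finset (Fin m) → ℝ)}

lemma half_expected_priceOf_le_sum_expectedBRev (hA : IsSelRule A) (hp : ∀ j, 0 ≤ p j)
    (hD : ∀ a, 0 < D.prob a →
      D.val a ∅ = 0 ∧ ∀ T T', D.val a (T ∪ T') ≤ D.val a T + D.val a T')
    {b : ℝ} (hb : 1 ≤ b) (hXT : ∀ X ⊆ S, ∀ T ⊆ S, T.Nonempty → priceOf p X ≤ b * priceOf p T)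
    {r : ℝ} {N : ℕ} (hrN : r ^ N = 2 * b) :
    (∑ a, D.prob a * priceOf p (A (D.val a) p univ ∩ S)) / 2 ≤
      (r - 1) * ∑ k ∈ range N, expectedBRev D (fun j => r ^ k / 2 * p j) S := by
  calc (∑ a, D.prob a * priceOf p (A (D.val a) p univ ∩ S)) / 2
      = ∑ a, D.prob a * (priceOf p (A (D.val a) p univ ∩ S) / 2) := by
        rw [sum_div]; simp only [mul_div_assoc]
    _ ≤ ∑ a, D.prob a *
          ((r - 1) * ∑ k ∈ range N, BRev (D.val a) (fun j => r ^ k / 2 * p j) S) :=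
        sum_le_sum fun a _ => by
          rcases (D.prob_nonneg a).eq_or_lt with h | h
          · simp [← h]
          · exact mul_le_mul_of_nonneg_left
              (half_priceOf_le_sum_bRev hA hp (hD a h).1 (hD a h).2 hb hXT hrN) h.le
    _ = (r - 1) * ∑ k ∈ range N, expectedBRev D (fun j => r ^ k / 2 * p j) S := by
        simp only [expectedBRev, mul_sum]
        rw [sum_comm]
        exact sum_congr rfl fun _ _ => sum_congr rfl fun _ _ => by ring

end Expectation

lemma isClosed_setOf_isDemanded_const_mul (v : Finset (Fin m) → ℝ) (p : Fin m → ℝ)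
    (S T : Finset (Fin m)) : IsClosed {γ : ℝ | IsDemanded v (fun j => γ * p j) S T} := by
  simp only [IsDemanded, priceOf_const_mul, Set.ofPred_and, Set.ofPred_forall]
  exact isClosed_const.inter <| isClosed_iInter fun T' => isClosed_iInter fun _ =>
    isClosed_le (by fun_prop) (by fun_prop)

lemma eventually_isDemanded_imp (v : Finset (Fin m) → ℝ) (p : Fin m → ℝ) (S : Finset (Fin m))
    (γ₀ : ℝ) : ∀ᶠ γ in 𝓝 γ₀, ∀ T, IsDemanded v (fun j => γ * p j) S T →
      IsDemanded v (fun j => γ₀ * p j) S T := by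
  refine eventually_all.2 fun T => ?_
  by_cases hT : IsDemanded v (fun j => γ₀ * p j) S T
  · exact .of_forall fun _ _ => hT
  · filter_upwards [(isClosed_setOf_isDemanded_const_mul v p S T).isOpen_compl.mem_nhds hT]
      with γ hγ hdem using absurd hdem hγ

lemma IsSelRule.eventually_mul_bRev_le
    {A : (Finset (Fin m) → ℝ) → (Fin m → ℝ) → Finset (Fin m) → Finset (Fin m)}
    (hA : IsSelRule A) (v : Finset (Fin m) → ℝ) (p : Fin m → ℝ) (S : Finset (Fin m))
    {γ₀ : ℝ} (hγ₀ : 0 < γ₀) :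
    ∀ᶠ γ in 𝓝 γ₀, γ₀ * BRev v (fun j => γ * p j) S ≤ γ * BRev v (fun j => γ₀ * p j) S := by
  filter_upwards [eventually_isDemanded_imp v p S γ₀, lt_mem_nhds hγ₀] with γ hdem hγ
  have hle := (hdem _ (hA v (fun j => γ * p j) S).1).priceOf_le_bRev
  rw [priceOf_const_mul] at hle
  rw [hA.bRev_const_mul v γ]
  nlinarith

lemma upperSemicontinuousAt_of_eventually_mul_le {f : ℝ → ℝ} {x₀ : ℝ} (hx₀ : 0 < x₀)
    (hf : ∀ᶠ x in 𝓝 x₀, x₀ * f x ≤ x * f x₀) : UpperSemicontinuousAt f x₀ := by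
  intro y hy
  have hlim : Tendsto (fun x => x * f x₀ / x₀) (𝓝 x₀) (𝓝 (f x₀)) := by
    simpa [hx₀.ne'] using ((continuous_id.mul continuous_const).div_const x₀).tendsto x₀
  filter_upwards [hf, hlim.eventually (gt_mem_nhds hy)] with x hx hxy
  exact ((le_div_iff₀' hx₀).2 hx).trans_lt hxy

lemma upperSemicontinuousOn_expectedBRev
    {A : (Finset (Fin m) → ℝ) → (Fin m → ℝ) → Finset (Fin m) → Finset (Fin m)}
    (hA : IsSelRule A) (D : FinDist (Finset (Fin m) → ℝ)) (p : Fin m → ℝ) (S : Finset (Fin m)) :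
    UpperSemicontinuousOn (fun γ => expectedBRev D (fun j => γ * p j) S) (Set.Ioi 0) := by
  intro γ₀ hγ₀
  refine (upperSemicontinuousAt_of_eventually_mul_le hγ₀ ?_).upperSemicontinuousWithinAt _
  filter_upwards [eventually_all.2 fun a => hA.eventually_mul_bRev_le (D.val a) p S hγ₀]
    with γ hγ
  simp only [expectedBRev, mul_sum]
  exact sum_le_sum fun a _ => by nlinarith [hγ a, D.prob_nonneg a]

lemma tendsto_natCast_mul_rpow_inv_sub_one {x : ℝ} (hx : 0 < x) :
    Tendsto (fun N : ℕ => (N : ℝ) * (x ^ (N : ℝ)⁻¹ - 1)) atTop (𝓝 (Real.log x)) := by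
  simpa [Function.comp_def] using
    (tendsto_rpow_sub_one_log hx).comp
      (tendsto_inv_atTop_nhdsGT_zero.comp tendsto_natCast_atTop_atTop)

lemma pow_div_two_mem_Icc {r b : ℝ} {N k : ℕ} (hr : 1 ≤ r) (hrN : r ^ N = 2 * b) (hk : k ≤ N) :
    r ^ k / 2 ∈ Set.Icc (1 / 2) b := by
  have h1 : 1 ≤ r ^ k := one_le_pow₀ hr
  have h2 : r ^ k ≤ r ^ N := pow_le_pow_right₀ hr hk
  constructor <;> linarith

theorem subadditive_rrs_general
    (m : ℕ)
    (D : FinDist (Finset (Fin m) → ℝ))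
    (hD : ∀ a, 0 < D.prob a → IsValuation (D.val a) ∧
      ∀ T T' : Finset (Fin m), D.val a (T ∪ T') ≤ D.val a T + D.val a T')
    (S : Finset (Fin m)) (hS : S.Nonempty)
    (p : Fin m → ℝ) (hp : ∀ j, 0 ≤ p j) (hpS : ∀ j ∈ S, 0 < p j)
    (A : (Finset (Fin m) → ℝ) → (Fin m → ℝ) → Finset (Fin m) → Finset (Fin m))
    (hA : IsSelRule A) :
    ∃ γ : ℝ, 1 / 2 ≤ γ ∧ γ ≤ (m : ℝ) * (S.sup' hS p / S.inf' hS p) ∧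
      (∀ j, p j / 2 ≤ γ * p j) ∧
      ((1 / (2 * Real.log (2 * (m : ℝ) * (S.sup' hS p / S.inf' hS p)))) *
          ∑ a, D.prob a * priceOf p (A (D.val a) p Finset.univ ∩ S) ≤
        ∑ a, D.prob a * BRev (D.val a) (fun j => γ * p j) S) := by
  set b := (m : ℝ) * (S.sup' hS p / S.inf' hS p)
  set E := ∑ a, D.prob a * priceOf p (A (D.val a) p univ ∩ S)
  have hb : 1 ≤ b := one_le_mul_sup'_div_inf' hS hpS
  obtain ⟨γ, hγ, hmax⟩ := ((upperSemicontinuousOn_expectedBRev hA D p S).mono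
    fun x hx => (one_half_pos.trans_le hx.1 : 0 < x)).exists_isMaxOn
    (Set.nonempty_Icc.2 (by linarith : (1 : ℝ) / 2 ≤ b)) isCompact_Icc
  refine ⟨γ, hγ.1, hγ.2, fun j => by nlinarith [hp j, hγ.1], ?_⟩
  have hgrid : ∀ N : ℕ, 0 < N →
      E / 2 ≤ N * ((2 * b) ^ (N : ℝ)⁻¹ - 1) * expectedBRev D (fun j => γ * p j) S := by
    intro N hN
    set r := (2 * b) ^ (N : ℝ)⁻¹
    have hrN : r ^ N = 2 * b := Real.rpow_inv_natCast_pow (by linarith) hN.ne'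
    have hr : 1 ≤ r := Real.one_le_rpow (by linarith) (by positivity)
    calc E / 2 ≤ (r - 1) * ∑ k ∈ range N, expectedBRev D (fun j => r ^ k / 2 * p j) S :=
          half_expected_priceOf_le_sum_expectedBRev hA hp
            (fun a ha => ⟨(hD a ha).1.1, (hD a ha).2⟩) hb
            (fun X hX T hT hTne => priceOf_le_mul_priceOf hS hpS hX hT hTne) hrN
      _ ≤ (r - 1) * ∑ k ∈ range N, expectedBRev D (fun j => γ * p j) S := by
          gcongr with k hk
          exact hmax (pow_div_two_mem_Icc hr hrN (mem_range.1 hk).le)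
      _ = N * (r - 1) * expectedBRev D (fun j => γ * p j) S := by
          rw [sum_const, card_range, nsmul_eq_mul]; ring
  have hlog : E / 2 ≤ Real.log (2 * b) * expectedBRev D (fun j => γ * p j) S :=
    ge_of_tendsto ((tendsto_natCast_mul_rpow_inv_sub_one (by linarith)).mul_const _)
      (eventually_atTop.2 ⟨1, fun N hN => hgrid N hN⟩)
  have hlog_pos : 0 < Real.log (2 * b) := Real.log_pos (by linarith)
  rw [show 2 * (m : ℝ) * (S.sup' hS p / S.inf' hS p) = 2 * b by ring, one_div_mul_eq_div,
    div_le_iff₀ (by positivity)]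
  change E ≤ expectedBRev D (fun j => γ * p j) S * (2 * Real.log (2 * b))
  linarith

/-- The revenue recovery scheme for subadditive valuations: a uniform
scaling `q = γ·p` with `γ ∈ [1/2, m·Γ]` recovers, over the available set `S`, a
`1/(2 ln(2mΓ))` fraction of the revenue contribution of `S` under `p`, where
`Γ = (max_{j∈S} p_j)/(min_{j∈S} p_j)`. -/
theorem subadditive_rrs
    (m : ℕ) (hm : 1 ≤ m)
    (D : FinDist (Finset (Fin m) → ℝ))
    (hD : ∀ a, 0 < D.prob a → IsValuation (D.val a) ∧
      ∀ T T' : Finset (Fin m), D.val a (T ∪ T') ≤ D.val a T + D.val a T')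
    (S : Finset (Fin m)) (hS : S.Nonempty)
    (p : Fin m → ℝ) (hp : ∀ j, 0 ≤ p j) (hpS : ∀ j ∈ S, 0 < p j)
    (A : (Finset (Fin m) → ℝ) → (Fin m → ℝ) → Finset (Fin m) → Finset (Fin m))
    (hA : IsSelRule A) :
    ∃ γ : ℝ, 1 / 2 ≤ γ ∧ γ ≤ (m : ℝ) * (S.sup' hS p / S.inf' hS p) ∧
      (∀ j, p j / 2 ≤ γ * p j) ∧
      ((1 / (2 * Real.log (2 * (m : ℝ) * (S.sup' hS p / S.inf' hS p)))) *
          ∑ a, D.prob a * priceOf p (A (D.val a) p Finset.univ ∩ S) ≤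
        ∑ a, D.prob a * BRev (D.val a) (fun j => γ * p j) S) :=
  subadditive_rrs_general m D hD S hS p hp hpS A hA
end

section
/- Let k ≥ 1 and let w ∈ ℝ_{≥0}^k. Suppose that for every subset T ⊆ {1,…,k} we are given a vector y^T ∈ ℝ_{≥0}^k such that (i) y^T_j = 0 for every j ∉ T, and (ii) ∑_{j=1}^k y^T_j ≥ ∑_{j ∈ T} w_j. Then there exist nonnegative reals (λ_T)_{T ⊆ {1,…,k}} with ∑_T λ_T = 1 such that: (a) ∑_T λ_T · y^T_j ≤ w_j for every coordinate j; and (b) ∑_{j=1}^k ∑_T λ_T · y^T_j ≥ (1 − 1/e) · ∑_{j=1}^k w_j. -/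
/-!
Run the continuous greedy process: starting from `x = 0`, move with velocity `y^T`, where `T` is
the set of coordinates with `x_j < w_j`. The gap `g = |w| - |x|` is at most `∑_{j ∈ T} w_j`, hence
at most `|y^T|`, so `g' ≤ -g` and after unit time `g ≤ |w| / e`. The process is piecewise linear,
with breakpoints where a coordinate saturates; on a piece of length `δ` the gap shrinks by a factor
`1 - δ ≤ e^{-δ}`, and since `T` shrinks at each breakpoint there are finitely many pieces.
-/

open Finset Real

section Mixtures

variable {κ E : Type*} [Fintype κ] [AddCommMonoid E] [Module ℝ E]

def mixtures (v : κ → E) (r : ℝ) : Set E :=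
  {z | ∃ lam : κ → ℝ, (∀ i, 0 ≤ lam i) ∧ ∑ i, lam i = r ∧ z = ∑ i, lam i • v i}

theorem add_mem_mixtures {v : κ → E} {a b : ℝ} {z₁ z₂ : E}
    (h₁ : z₁ ∈ mixtures v a) (h₂ : z₂ ∈ mixtures v b) : z₁ + z₂ ∈ mixtures v (a + b) := by
  obtain ⟨lam₁, hlam₁, hsum₁, rfl⟩ := h₁
  obtain ⟨lam₂, hlam₂, hsum₂, rfl⟩ := h₂
  refine ⟨lam₁ + lam₂, fun i => add_nonneg (hlam₁ i) (hlam₂ i), ?_, ?_⟩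
  · simp only [Pi.add_apply, sum_add_distrib, hsum₁, hsum₂]
  · simp only [Pi.add_apply, add_smul, sum_add_distrib]

theorem smul_mem_mixtures (v : κ → E) (i : κ) {r : ℝ} (hr : 0 ≤ r) :
    r • v i ∈ mixtures v r := by
  classical
  refine ⟨Pi.single i r, fun j => ?_, by simp, by simp [Pi.single_apply]⟩
  rcases eq_or_ne j i with rfl | hj
  · simpa using hr
  · simp [hj]

end Mixtures

section Step

variable {ι : Type*} [Fintype ι]

theorem exists_longest_step {x v w : ι → ℝ} {r : ℝ} (hr : 0 ≤ r) (hxw : x ≤ w) :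
    ∃ δ, 0 ≤ δ ∧ δ ≤ r ∧ x + δ • v ≤ w ∧ (δ = r ∨ ∃ j, 0 < v j ∧ x j + δ * v j = w j) := by
  set S := univ.filter fun j => 0 < v j
  rcases S.eq_empty_or_nonempty with hS | hS
  · refine ⟨r, hr, le_rfl, fun j => ?_, Or.inl rfl⟩
    have hvj : v j ≤ 0 := by simpa [S] using filter_eq_empty_iff.1 hS (mem_univ j)
    simp only [Pi.add_apply, Pi.smul_apply, smul_eq_mul]
    linarith [hxw j, mul_nonpos_of_nonneg_of_nonpos hr hvj]
  obtain ⟨j₀, hj₀S, hj₀min⟩ := S.exists_min_image (fun j => (w j - x j) / v j) hS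
  have hvj₀ : 0 < v j₀ := (mem_filter.1 hj₀S).2
  set δ := min r ((w j₀ - x j₀) / v j₀) with hδ
  have hδ0 : 0 ≤ δ := le_min hr (div_nonneg (sub_nonneg.2 (hxw j₀)) hvj₀.le)
  refine ⟨δ, hδ0, min_le_left _ _, fun j => ?_, ?_⟩
  · simp only [Pi.add_apply, Pi.smul_apply, smul_eq_mul]
    rcases lt_or_ge 0 (v j) with hvj | hvj
    · have hδ : δ ≤ (w j - x j) / v j :=
        (min_le_right _ _).trans (hj₀min j (mem_filter.2 ⟨mem_univ j, hvj⟩))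
      linarith [(le_div_iff₀ hvj).1 hδ]
    · linarith [hxw j, mul_nonpos_of_nonneg_of_nonpos hδ0 hvj]
  · rcases min_choice r ((w j₀ - x j₀) / v j₀) with h | h
    · exact Or.inl h
    · refine Or.inr ⟨j₀, hvj₀, ?_⟩
      rw [hδ, h, div_mul_cancel₀ _ hvj₀.ne']
      ring

theorem sum_sub_sum_le_sum_filter_lt {x w : ι → ℝ} (hx : 0 ≤ x) (hxw : x ≤ w) :
    ∑ j, w j - ∑ j, x j ≤ ∑ j ∈ univ.filter (fun j => x j < w j), w j := by
  rw [← sum_sub_distrib,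
    ← sum_filter_of_ne fun j _ h => lt_of_le_of_ne (hxw j) (sub_ne_zero.1 h).symm]
  exact sum_le_sum fun j _ => sub_le_self _ (hx j)

end Step

theorem sub_mul_le_exp_neg_mul {g m δ : ℝ} (hg : 0 ≤ g) (hδ : 0 ≤ δ) (hgm : g ≤ m) :
    g - δ * m ≤ exp (-δ) * g := by
  have := mul_le_mul_of_nonneg_right (by linarith [add_one_le_exp (-δ)] : 1 - δ ≤ exp (-δ)) hg
  nlinarith

section GreedyProcess

variable {ι : Type*} [Fintype ι] (w : ι → ℝ) (y : Finset ι → ι → ℝ)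
  (hy : ∀ T, 0 ≤ y T) (hy0 : ∀ T, ∀ j ∉ T, y T j = 0)
  (hylen : ∀ T, ∑ j ∈ T, w j ≤ ∑ j, y T j)
include hy hy0 hylen

theorem exists_mixture_gap_le (x : ι → ℝ) (r : ℝ) (hr : 0 ≤ r) (hx : 0 ≤ x) (hxw : x ≤ w) :
    ∃ z ∈ mixtures y r, x + z ≤ w ∧
      ∑ j, w j - ∑ j, (x + z) j ≤ exp (-r) * (∑ j, w j - ∑ j, x j) := by
  induction hn : (univ.filter fun j => x j < w j).card using Nat.strong_induction_on
    generalizing x r with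
  | _ n ih =>
  set T := univ.filter fun j => x j < w j
  obtain ⟨δ, hδ0, hδr, hstep, hend⟩ := exists_longest_step (v := y T) hr hxw
  have hgap : ∑ j, w j - ∑ j, (x + δ • y T) j ≤ exp (-δ) * (∑ j, w j - ∑ j, x j) := by
    have hsum : ∑ j, (x + δ • y T) j = ∑ j, x j + δ * ∑ j, y T j := by
      simp only [Pi.add_apply, Pi.smul_apply, smul_eq_mul, sum_add_distrib, mul_sum]
    rw [hsum, ← sub_sub]
    exact sub_mul_le_exp_neg_mul (sub_nonneg.2 (sum_le_sum fun j _ => hxw j)) hδ0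
      ((sum_sub_sum_le_sum_filter_lt hx hxw).trans (hylen T))
  rcases hend with rfl | ⟨j₀, hj₀pos, hj₀⟩
  · exact ⟨δ • y T, smul_mem_mixtures y T hδ0, hstep, hgap⟩
  set x' := x + δ • y T
  have hxx' : x ≤ x' := le_add_of_nonneg_right (smul_nonneg hδ0 (hy T))
  have hT' : (univ.filter fun j => x' j < w j) ⊂ T := by
    refine (ssubset_iff_of_subset (monotone_filter_right _ fun j _ h => (hxx' j).trans_lt h)).2
      ⟨j₀, ?_, by simp [x', hj₀]⟩
    by_contra hj₀T
    exact hj₀pos.ne' (hy0 T j₀ hj₀T)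
  obtain ⟨z, hz, hzw, hzgap⟩ :=
    ih _ (hn ▸ card_lt_card hT') x' (r - δ) (sub_nonneg.2 hδr) (hx.trans hxx') hstep rfl
  refine ⟨δ • y T + z, by simpa using add_mem_mixtures (smul_mem_mixtures y T hδ0) hz,
    by rwa [← add_assoc], ?_⟩
  calc ∑ j, w j - ∑ j, (x + (δ • y T + z)) j = ∑ j, w j - ∑ j, (x' + z) j := by rw [add_assoc]
    _ ≤ exp (-(r - δ)) * (∑ j, w j - ∑ j, x' j) := hzgap
    _ ≤ exp (-(r - δ)) * (exp (-δ) * (∑ j, w j - ∑ j, x j)) := by gcongr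
    _ = exp (-r) * (∑ j, w j - ∑ j, x j) := by rw [← mul_assoc, ← exp_add]; ring_nf

end GreedyProcess

theorem convex_hull_sampler_general
    (k : ℕ)
    (w : Fin k → ℝ) (hw : ∀ j, 0 ≤ w j)
    (y : Finset (Fin k) → Fin k → ℝ) (hy : ∀ T j, 0 ≤ y T j)
    (hy0 : ∀ (T : Finset (Fin k)) (j : Fin k), j ∉ T → y T j = 0)
    (hylen : ∀ T : Finset (Fin k), ∑ j ∈ T, w j ≤ ∑ j, y T j) :
    ∃ lam : Finset (Fin k) → ℝ,
      (∀ T, 0 ≤ lam T) ∧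
      (∑ T : Finset (Fin k), lam T = 1) ∧
      (∀ j, ∑ T : Finset (Fin k), lam T * y T j ≤ w j) ∧
      ((1 - 1 / Real.exp 1) * ∑ j, w j ≤ ∑ j, ∑ T : Finset (Fin k), lam T * y T j) := by
  obtain ⟨z, ⟨lam, hlam0, hlam1, rfl⟩, hzw, hgap⟩ :=
    exists_mixture_gap_le w y hy hy0 hylen 0 1 zero_le_one le_rfl hw
  refine ⟨lam, hlam0, hlam1, fun j => by simpa using hzw j, ?_⟩
  simp only [zero_add, Pi.zero_apply, sum_const_zero, sub_zero, Finset.sum_apply, Pi.smul_apply,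
    smul_eq_mul] at hgap
  rw [one_div, ← exp_neg]
  linarith

/-- The convex hull sampler: given a target vector `w ∈ ℝ_{≥0}^k` and for
every subset `T ⊆ [k]` a vector `y^T ∈ ℝ_{≥0}^k` supported on `T` with
`|y^T| ≥ ∑_{j ∈ T} w_j`, there is a convex combination of the `y^T` that is coordinatewise
dominated by `w` and whose total mass is at least `(1 - 1/e)·|w|`. -/
theorem convex_hull_sampler
    (k : ℕ) (hk : 1 ≤ k)
    (w : Fin k → ℝ) (hw : ∀ j, 0 ≤ w j)
    (y : Finset (Fin k) → Fin k → ℝ) (hy : ∀ T j, 0 ≤ y T j)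
    (hy0 : ∀ (T : Finset (Fin k)) (j : Fin k), j ∉ T → y T j = 0)
    (hylen : ∀ T : Finset (Fin k), ∑ j ∈ T, w j ≤ ∑ j, y T j) :
    ∃ lam : Finset (Fin k) → ℝ,
      (∀ T, 0 ≤ lam T) ∧
      (∑ T : Finset (Fin k), lam T = 1) ∧
      (∀ j, ∑ T : Finset (Fin k), lam T * y T j ≤ w j) ∧
      ((1 - 1 / Real.exp 1) * ∑ j, w j ≤ ∑ j, ∑ T : Finset (Fin k), lam T * y T j) :=
  convex_hull_sampler_general k w hw y hy hy0 hylen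
end

section
/- Let v be a valuation on m items that is monotone (v(S) ≤ v(T) whenever S ⊆ T), subadditive (v(T ∪ T') ≤ v(T) + v(T') for all T, T'), and gross substitutes. Then for every item pricing p, every S ⊆ Fin m, and every demanded bundle T of v at pricing p with all items available, there exists a demanded bundle T' of v at pricing p with available set S such that T ∩ S ⊆ T'; consequently Rev(v|S, p) ≥ p(T ∩ S). -/
open Finset

/-- A gross substitutes valuation: if prices rise from `p` to `p'`, then for every demanded
bundle `T` at `p` (all items available) there is a demanded bundle `T'` at `p'` containing
every item of `T` whose price did not change. -/
def IsGrossSubstitutes {m : ℕ} (v : Finset (Fin m) → ℝ) : Prop :=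
  ∀ p p' : Fin m → ℝ, (∀ j, 0 ≤ p j) → (∀ j, p j ≤ p' j) →
    ∀ T, IsDemanded v p Finset.univ T →
      ∃ T', IsDemanded v p' Finset.univ T' ∧ ∀ j ∈ T, p j = p' j → j ∈ T'

/-- For a monotone, subadditive, gross substitutes valuation, any
demanded bundle `T` at pricing `p` with all items available survives restriction to an
available set `S`: some demanded bundle at `p` over `S` contains `T ∩ S`, and hence
`Rev(v|S, p) ≥ p(T ∩ S)`. -/
theorem gross_substitutes_demand_restriction
    (m : ℕ) (hm : 1 ≤ m)
    (v : Finset (Fin m) → ℝ) (hval : IsValuation v)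
    (hmono : ∀ S T : Finset (Fin m), S ⊆ T → v S ≤ v T)
    (hsub : ∀ T T' : Finset (Fin m), v (T ∪ T') ≤ v T + v T')
    (hgs : IsGrossSubstitutes v)
    (p : Fin m → ℝ) (hp : ∀ j, 0 ≤ p j)
    (S : Finset (Fin m))
    (T : Finset (Fin m)) (hT : IsDemanded v p Finset.univ T) :
    (∃ T', IsDemanded v p S T' ∧ T ∩ S ⊆ T') ∧ priceOf p (T ∩ S) ≤ BRev v p S := by
  classical
  set M : ℝ := 1 + v Finset.univ with hM
  have hM0 : 0 < M := by have := hval.2 Finset.univ; linarith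
  set p' : Fin m → ℝ := fun j => if j ∈ S then p j else p j + M with hp'
  have hp'nn : ∀ j, 0 ≤ p' j := by
    intro j; simp only [hp']; split <;> [exact hp j; linarith [hp j]]
  have hle : ∀ j, p j ≤ p' j := by
    intro j; simp only [hp']; split <;> linarith
  obtain ⟨T', hT'dem, hT'inc⟩ := hgs p p' hp hle T hT
  -- T' ⊆ S
  have hT'S : T' ⊆ S := by
    intro j hj
    by_contra hjS
    have hery : T'.erase j ⊆ Finset.univ := Finset.subset_univ _
    have h1 := hT'dem.2 (T'.erase j) hery
    have hprice : priceOf p' T' = priceOf p' (T'.erase j) + p' j := by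
      unfold priceOf
      rw [← Finset.add_sum_erase _ _ hj]; ring
    have hins : T' = insert j (T'.erase j) := (Finset.insert_erase hj).symm
    have hsub1 : v T' ≤ v (T'.erase j) + v {j} := by
      have heq : T'.erase j ∪ {j} = T' := by
        rw [Finset.union_comm, ← Finset.insert_eq]; exact Finset.insert_erase hj
      calc v T' = v (T'.erase j ∪ {j}) := by rw [heq]
        _ ≤ v (T'.erase j) + v {j} := hsub _ _
    have hvj : v {j} ≤ v Finset.univ := hmono _ _ (Finset.subset_univ _)
    have : p' j = p j + M := by simp only [hp', if_neg hjS]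
    have hpj := hp j
    linarith
  -- prices agree on subsets of S
  have hagree : ∀ T'' : Finset (Fin m), T'' ⊆ S → priceOf p' T'' = priceOf p T'' := by
    intro T'' hT''
    unfold priceOf
    refine Finset.sum_congr rfl fun j hj => ?_
    simp only [hp', if_pos (hT'' hj)]
  have hT'dem' : IsDemanded v p S T' := by
    refine ⟨hT'S, fun T'' hT'' => ?_⟩
    have := hT'dem.2 T'' (Finset.subset_univ _)
    rw [hagree T'' hT'', hagree T' hT'S] at this
    exact this
  have hincl : T ∩ S ⊆ T' := by
    intro j hj
    rw [Finset.mem_inter] at hj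
    exact hT'inc j hj.1 (by simp only [hp', if_pos hj.2])
  refine ⟨⟨T', hT'dem', hincl⟩, ?_⟩
  have hle2 : priceOf p (T ∩ S) ≤ priceOf p T' :=
    Finset.sum_le_sum_of_subset_of_nonneg hincl (fun j _ _ => hp j)
  have hmem : priceOf p T' ∈ {r : ℝ | ∃ T, IsDemanded v p S T ∧ r = priceOf p T} :=
    ⟨T', hT'dem', rfl⟩
  have hbdd : BddAbove {r : ℝ | ∃ T, IsDemanded v p S T ∧ r = priceOf p T} := by
    refine ⟨priceOf p S, fun r hr => ?_⟩
    obtain ⟨U, hU, rfl⟩ := hr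
    exact Finset.sum_le_sum_of_subset_of_nonneg hU.1 (fun j _ _ => hp j)
  exact hle2.trans (le_csSup hbdd hmem)
end

section
/- Let v : Finset (Fin m) → ℝ be subadditive (v(T ∪ T') ≤ v(T) + v(T') for all T, T' ⊆ Fin m), let p be an item pricing, let S ⊆ Fin m, and let A* ⊆ Fin m be a set maximizing T ↦ v(T) − p(T) over all subsets T of Fin m. Then max_{T ⊆ S} ( v(T) − (1/2)·p(T) ) ≥ (1/2) · p(A* ∩ S). -/
open Finset

lemma priceOf_sdiff_add {m : ℕ} (p : Fin m → ℝ) {U A : Finset (Fin m)} (hUA : U ⊆ A) :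
    priceOf p (A \ U) + priceOf p U = priceOf p A :=
  sum_sdiff hUA

/-- Dropping `U` from the utility maximizer `A` loses at most `v U` in value, by subadditivity,
and saves `priceOf p U`. -/
lemma priceOf_le_of_subset_of_forall_utility_le {m : ℕ} {v : Finset (Fin m) → ℝ}
    (hsub : ∀ T T' : Finset (Fin m), v (T ∪ T') ≤ v T + v T') {p : Fin m → ℝ}
    {A U : Finset (Fin m)} (hA : ∀ T : Finset (Fin m), v T - priceOf p T ≤ v A - priceOf p A)
    (hUA : U ⊆ A) : priceOf p U ≤ v U := by
  have hsplit : v A ≤ v U + v (A \ U) := by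
    simpa only [union_sdiff_of_subset hUA] using hsub U (A \ U)
  linarith [hA (A \ U), priceOf_sdiff_add p hUA]

theorem subadditive_half_price_utility_general
    (m : ℕ)
    (v : Finset (Fin m) → ℝ)
    (hsub : ∀ T T' : Finset (Fin m), v (T ∪ T') ≤ v T + v T')
    (p : Fin m → ℝ)
    (S : Finset (Fin m))
    (Astar : Finset (Fin m))
    (hAstar : ∀ T : Finset (Fin m), v T - priceOf p T ≤ v Astar - priceOf p Astar) :
    ∃ T ⊆ S, (1 / 2) * priceOf p (Astar ∩ S) ≤ v T - (1 / 2) * priceOf p T := by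
  refine ⟨Astar ∩ S, inter_subset_right, ?_⟩
  linarith [priceOf_le_of_subset_of_forall_utility_le hsub hAstar
    (inter_subset_left : Astar ∩ S ⊆ Astar)]

/-- For a subadditive valuation `v`, an item pricing `p`, a set `S`,
and a utility-maximizing bundle `A*` over all items, the best utility over subsets of `S`
at half prices is at least `p(A* ∩ S)/2`. -/
theorem subadditive_half_price_utility
    (m : ℕ) (hm : 1 ≤ m)
    (v : Finset (Fin m) → ℝ)
    (hsub : ∀ T T' : Finset (Fin m), v (T ∪ T') ≤ v T + v T')
    (p : Fin m → ℝ) (hp : ∀ j, 0 ≤ p j)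
    (S : Finset (Fin m))
    (Astar : Finset (Fin m))
    (hAstar : ∀ T : Finset (Fin m), v T - priceOf p T ≤ v Astar - priceOf p Astar) :
    ∃ T ⊆ S, (1 / 2) * priceOf p (Astar ∩ S) ≤ v T - (1 / 2) * priceOf p T :=
  subadditive_half_price_utility_general m v hsub p S Astar hAstar
end

section
/- Let v : Finset (Fin m) → ℝ with v(∅) = 0, let p be an item pricing, let S ⊆ Fin m be nonempty, and let 0 < ℓ ≤ h be reals. Define U(γ) = max_{T ⊆ S} ( v(T) − γ·p(T) ). If U(h) > 0, then U(ℓ) − U(h) ≥ (h − ℓ) · min_{j ∈ S} p_j. -/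
open Finset

/-- `U(γ) = max_{T ⊆ S} (v(T) - γ·p(T))`: the buyer's optimal utility over subsets of `S`
at the uniformly scaled pricing `γ·p`. -/
noncomputable def maxUtil {m : ℕ} (v : Finset (Fin m) → ℝ) (p : Fin m → ℝ)
    (S : Finset (Fin m)) (γ : ℝ) : ℝ :=
  S.powerset.sup' ⟨∅, Finset.empty_mem_powerset S⟩ (fun T => v T - γ * priceOf p T)

/-! Let `T` be an optimal bundle at scaling `h`. Since `U(h) > 0 = v(∅) - h·p(∅)`, the bundle `T`
is nonempty, so `p(T) ≥ min_{j ∈ S} p_j`. Buying `T` at the lower scaling `ℓ` shows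
`U(ℓ) ≥ v(T) - ℓ·p(T) = U(h) + (h - ℓ)·p(T)`. -/

section

variable {m : ℕ}

@[simp]
theorem priceOf_empty (p : Fin m → ℝ) : priceOf p ∅ = 0 :=
  sum_empty

theorem inf'_le_priceOf {p : Fin m → ℝ} (hp : ∀ j, 0 ≤ p j) {S T : Finset (Fin m)}
    (hS : S.Nonempty) (hTS : T ⊆ S) (hT : T.Nonempty) : S.inf' hS p ≤ priceOf p T := by
  obtain ⟨j, hj⟩ := hT
  calc S.inf' hS p ≤ p j := inf'_le p (hTS hj)
    _ ≤ priceOf p T := single_le_sum (fun i _ ↦ hp i) hj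

theorem le_maxUtil (v : Finset (Fin m) → ℝ) (p : Fin m → ℝ) {S T : Finset (Fin m)}
    (hTS : T ⊆ S) (γ : ℝ) : v T - γ * priceOf p T ≤ maxUtil v p S γ :=
  le_sup' (fun T ↦ v T - γ * priceOf p T) (mem_powerset.mpr hTS)

theorem exists_maxUtil_eq (v : Finset (Fin m) → ℝ) (p : Fin m → ℝ) (S : Finset (Fin m))
    (γ : ℝ) : ∃ T ⊆ S, maxUtil v p S γ = v T - γ * priceOf p T := by
  obtain ⟨T, hTS, hT⟩ := exists_mem_eq_sup' ⟨∅, empty_mem_powerset S⟩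
    (fun T ↦ v T - γ * priceOf p T)
  exact ⟨T, mem_powerset.mp hTS, hT⟩

end

theorem utility_drop_general
    (m : ℕ)
    (v : Finset (Fin m) → ℝ) (hv : v ∅ = 0)
    (p : Fin m → ℝ) (hp : ∀ j, 0 ≤ p j)
    (S : Finset (Fin m)) (hS : S.Nonempty)
    (l h : ℝ) (hlh : l ≤ h)
    (hU : 0 < maxUtil v p S h) :
    (h - l) * S.inf' hS p ≤ maxUtil v p S l - maxUtil v p S h := by
  obtain ⟨T, hTS, hT⟩ := exists_maxUtil_eq v p S h
  have hT_nonempty : T.Nonempty := by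
    rw [nonempty_iff_ne_empty]
    rintro rfl
    simp [hT, hv] at hU
  calc (h - l) * S.inf' hS p ≤ (h - l) * priceOf p T :=
        mul_le_mul_of_nonneg_left (inf'_le_priceOf hp hS hTS hT_nonempty) (sub_nonneg.mpr hlh)
    _ = (v T - l * priceOf p T) - maxUtil v p S h := by rw [hT]; ring
    _ ≤ maxUtil v p S l - maxUtil v p S h := by gcongr; exact le_maxUtil v p hTS l

/-- If the buyer's optimal utility is still positive at the scaling `h`,
then as the scaling decreases from `h` to `ℓ` the optimal utility increases by at least
`(h - ℓ) · min_{j ∈ S} p_j`. -/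
theorem utility_drop
    (m : ℕ) (hm : 1 ≤ m)
    (v : Finset (Fin m) → ℝ) (hv : v ∅ = 0)
    (p : Fin m → ℝ) (hp : ∀ j, 0 ≤ p j)
    (S : Finset (Fin m)) (hS : S.Nonempty)
    (l h : ℝ) (hl : 0 < l) (hlh : l ≤ h)
    (hU : 0 < maxUtil v p S h) :
    (h - l) * S.inf' hS p ≤ maxUtil v p S l - maxUtil v p S h :=
  utility_drop_general m v hv p hp S hS l h hlh hU
end

section
/- Let m, k, t, ℓ be positive integers with t·ℓ < k ≤ m, let A ⊆ Fin m with |A| = k, and let p : Fin m → ℝ with p_j ≥ 0 for all j. Suppose that max_{T ⊆ Fin m} ( (1+t)·|T ∩ A| − p(T) ) > 0 and that max_{T ⊆ Fin m} ( (1+t)·|T ∩ A| − p(T) ) ≥ max_{T ⊆ Fin m} ( (1 + k/ℓ)·min(|T|, t·ℓ) − p(T) ). Then |{ j ∈ A : p_j ≤ t + 1 }| ≥ k·t / (t + 1). -/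
/-! Since `p ≥ 0`, items outside `A` only cost, so the `A`-type utility is additive with
per-item gain `1 + t - p j` on `A` and is maximised by the set `B` of items of `A` with
nonnegative gain; `bestA > 0` forces `B ≠ ∅`. Now compare with the `B`-type utility of the same
bundle `B`. If `|B| ≤ t·ℓ` it is `(1 + k/ℓ)|B| - p(B) > (1 + t)|B| - p(B)` because `k/ℓ > t`,
contradicting `bestB ≤ bestA`; so `|B| > t·ℓ`, and `(1 + k/ℓ)·t·ℓ - p(B) ≤ (1 + t)|B| - p(B)`
gives `k·t ≤ (1 + t)|B|`. -/

open Finset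

/-- The best utility achievable via the `A`-type additive component
`T ↦ (1+t)·|T ∩ A| - p(T)`. -/
noncomputable def bestA {m : ℕ} (t : ℕ) (A : Finset (Fin m)) (p : Fin m → ℝ) : ℝ :=
  (Finset.univ : Finset (Finset (Fin m))).sup' ⟨∅, Finset.mem_univ ∅⟩
    (fun T => (1 + (t : ℝ)) * ((T ∩ A).card : ℝ) - ∑ j ∈ T, p j)

/-- The best utility achievable via the `B`-type additive components
`T ↦ (1 + k/ℓ)·min(|T|, t·ℓ) - p(T)`. -/
noncomputable def bestB {m : ℕ} (k t l : ℕ) (p : Fin m → ℝ) : ℝ :=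
  (Finset.univ : Finset (Finset (Fin m))).sup' ⟨∅, Finset.mem_univ ∅⟩
    (fun T => (1 + (k : ℝ) / (l : ℝ)) * min ((T.card : ℝ)) ((t * l : ℕ) : ℝ) - ∑ j ∈ T, p j)

theorem Finset.sum_le_sum_of_nonneg_of_nonpos_outside {ι M : Type*} [AddCommMonoid M]
    [PartialOrder M] [IsOrderedAddMonoid M] {w : ι → M} {S T : Finset ι}
    (hS : ∀ j ∈ S, 0 ≤ w j) (hT : ∀ j ∈ T, j ∉ S → w j ≤ 0) :
    ∑ j ∈ T, w j ≤ ∑ j ∈ S, w j := by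
  classical
  rw [← sum_inter_add_sum_sdiff T S]
  calc ∑ j ∈ T ∩ S, w j + ∑ j ∈ T \ S, w j ≤ ∑ j ∈ T ∩ S, w j + 0 :=
        add_le_add_right (sum_nonpos fun j hj => hT j (mem_sdiff.1 hj).1 (mem_sdiff.1 hj).2) _
    _ ≤ ∑ j ∈ S, w j := by
        rw [add_zero]
        exact sum_le_sum_of_subset_of_nonneg inter_subset_right fun j hj _ => hS j hj

theorem bestA_le {m : ℕ} {t : ℕ} {A B : Finset (Fin m)} {p : Fin m → ℝ} (hp : ∀ j, 0 ≤ p j)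
    (hB : ∀ j, j ∈ B ↔ j ∈ A ∧ p j ≤ (t : ℝ) + 1) :
    bestA t A p ≤ (1 + t) * B.card - ∑ j ∈ B, p j := by
  have gain_sum (T : Finset (Fin m)) :
      (1 + t) * (T.card : ℝ) - ∑ j ∈ T, p j = ∑ j ∈ T, (1 + t - p j) := by
    rw [sum_sub_distrib, sum_const, nsmul_eq_mul, mul_comm]
  refine sup'_le _ _ fun T _ => ?_
  calc (1 + t) * ((T ∩ A).card : ℝ) - ∑ j ∈ T, p j
      ≤ (1 + t) * ((T ∩ A).card : ℝ) - ∑ j ∈ T ∩ A, p j := by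
        refine sub_le_sub_left ?_ _
        exact sum_le_sum_of_subset_of_nonneg inter_subset_left fun j _ _ => hp j
    _ ≤ (1 + t) * B.card - ∑ j ∈ B, p j := by
        rw [gain_sum, gain_sum]
        refine sum_le_sum_of_nonneg_of_nonpos_outside (fun j hj => ?_) fun j hjTA hjB => ?_
        · linarith [((hB j).1 hj).2]
        · have : (t : ℝ) + 1 < p j := not_le.1 fun h => hjB ((hB j).2 ⟨(mem_inter.1 hjTA).2, h⟩)
          linarith

theorem mul_div_add_one_le_of_one_add_div_mul_min_le {k t l b : ℝ} (hl : 0 < l) (ht : 0 ≤ t)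
    (htl : t * l < k) (hb : 0 < b) (h : (1 + k / l) * min b (t * l) ≤ (1 + t) * b) :
    k * t / (t + 1) ≤ b := by
  have hkl : t < k / l := (lt_div_iff₀ hl).2 htl
  rcases le_or_gt b (t * l) with hbtl | htlb
  · rw [min_eq_left hbtl] at h
    exact absurd h (not_le.2 (mul_lt_mul_of_pos_right (by linarith) hb))
  · have hkt : k / l * (t * l) = k * t := by field_simp
    rw [min_eq_right htlb.le, add_mul, one_mul, hkt] at h
    rw [div_le_iff₀ (by linarith)]
    linarith [mul_nonneg ht hl.le]

theorem a_type_buys_many_items_general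
    (m k t l : ℕ) (hl : 0 < l)
    (htl : t * l < k)
    (A : Finset (Fin m))
    (p : Fin m → ℝ) (hp : ∀ j, 0 ≤ p j)
    (B : Finset (Fin m)) (hB : ∀ j, j ∈ B ↔ j ∈ A ∧ p j ≤ (t : ℝ) + 1)
    (hpos : 0 < bestA t A p)
    (hge : bestB k t l p ≤ bestA t A p) :
    (k : ℝ) * t / (t + 1) ≤ (B.card : ℝ) := by
  have hA_le := bestA_le hp hB
  have hB_ge : (1 + (k : ℝ) / l) * min (B.card : ℝ) ((t * l : ℕ) : ℝ) - ∑ j ∈ B, p j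
      ≤ bestB k t l p :=
    le_sup' (fun T : Finset (Fin m) =>
      (1 + (k : ℝ) / l) * min (T.card : ℝ) ((t * l : ℕ) : ℝ) - ∑ j ∈ T, p j) (mem_univ B)
  have hB_card : (0 : ℝ) < B.card := by
    rcases B.eq_empty_or_nonempty with rfl | hne
    · simp only [card_empty, CharP.cast_eq_zero, mul_zero, sum_empty, sub_self] at hA_le
      linarith
    · exact_mod_cast hne.card_pos
  push_cast at hB_ge
  exact mul_div_add_one_le_of_one_add_div_mul_min_le (l := l) (by exact_mod_cast hl)
    t.cast_nonneg (by exact_mod_cast htl) hB_card (by linarith)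

/-- If the `A`-type utility is positive and at least the `B`-type
utility, then at least `k·t/(t+1)` of the items of `A` are priced at most `t + 1`. -/
theorem a_type_buys_many_items
    (m k t l : ℕ) (hm : 0 < m) (hk : 0 < k) (ht : 0 < t) (hl : 0 < l)
    (htl : t * l < k) (hkm : k ≤ m)
    (A : Finset (Fin m)) (hA : A.card = k)
    (p : Fin m → ℝ) (hp : ∀ j, 0 ≤ p j)
    (B : Finset (Fin m)) (hB : ∀ j, j ∈ B ↔ j ∈ A ∧ p j ≤ (t : ℝ) + 1)
    (hpos : 0 < bestA t A p)
    (hge : bestB k t l p ≤ bestA t A p) :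
    (k : ℝ) * t / (t + 1) ≤ (B.card : ℝ) :=
  a_type_buys_many_items_general m k t l hl htl A p hp B hB hpos hge
end

section
/- Let m, k, t, ℓ be positive integers with t·ℓ < k ≤ m and k ≥ 2·ℓ·(t+1), let A ⊆ Fin m with |A| = k, and let p : Fin m → ℝ with p_j ≥ 0 for all j. Suppose that max_{T ⊆ Fin m} ( (1+t)·|T ∩ A| − p(T) ) > 0 and that max_{T ⊆ Fin m} ( (1+t)·|T ∩ A| − p(T) ) ≥ max_{T ⊆ Fin m} ( (1 + k/ℓ)·min(|T|, t·ℓ) − p(T) ). Then ∑_{j ∈ A, p_j ≤ t+1} p_j ≤ 2·k·(t+1)/t. -/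
open Finset

/-!
The best `A`-type purchase is `B` itself, so the `A`-type utility is at most `(1+t)|B| - p(B)`.
If `|B| ≤ tℓ`, buying `B` as a `B`-type bundle would pay `1 + k/ℓ > 1 + t` per item, so `|B| > tℓ`.
Buying instead the `tℓ` cheapest items `T` of `B` as a `B`-type bundle earns `tℓ + tk - p(T)` with
`|B|·p(T) ≤ tℓ·p(B)`; comparing with the `A`-type utility gives
`p(B)(|B| - tℓ) ≤ k(|B| - tℓ) - (k - |B|)((1+t)|B| - tℓ)`, hence `p(B) ≤ k ≤ 2k(t+1)/t`.
-/

theorem Finset.exists_subset_card_eq_card_nsmul_sum_le {ι M : Type*} [AddCommMonoid M]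
    [LinearOrder M] [IsOrderedAddMonoid M] (f : ι → M) (s : Finset ι) {n : ℕ} (hn : n ≤ #s) :
    ∃ t ⊆ s, #t = n ∧ #s • ∑ i ∈ t, f i ≤ n • ∑ i ∈ s, f i := by
  classical
  induction s using Finset.induction_on_max_value f generalizing n with
  | empty => exact ⟨∅, by simp_all⟩
  | insert a s ha hmax ih =>
    rw [card_insert_of_notMem ha] at hn ⊢
    rcases hn.lt_or_eq with hn | rfl
    · obtain ⟨t, hts, rfl, ht⟩ := ih (Nat.lt_succ_iff.mp hn)
      refine ⟨t, hts.trans (subset_insert _ _), rfl, ?_⟩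
      rw [sum_insert ha, succ_nsmul, nsmul_add, add_comm (#t • f a)]
      exact add_le_add ht (sum_le_card_nsmul t f (f a) fun x hx => hmax x (hts hx))
    · exact ⟨insert a s, Subset.rfl, card_insert_of_notMem ha, le_rfl⟩

theorem Finset.sum_le_sum_filter_nonneg {ι M : Type*} [AddCommMonoid M] [LinearOrder M]
    [IsOrderedAddMonoid M] {s t : Finset ι} (hst : s ⊆ t) (f : ι → M)
    [DecidablePred fun i => 0 ≤ f i] :
    ∑ i ∈ s, f i ≤ ∑ i ∈ t with 0 ≤ f i, f i := by
  rw [← sum_filter_add_sum_filter_not s fun i => 0 ≤ f i]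
  refine add_le_of_le_of_nonpos ?_ (sum_nonpos fun i hi => ?_)
  · exact sum_le_sum_of_subset_of_nonneg (filter_subset_filter _ hst) fun i hi _ =>
      (mem_filter.1 hi).2
  · exact (not_le.1 (mem_filter.1 hi).2).le

theorem bestA_le_sum_filter {m : ℕ} (t : ℕ) (A : Finset (Fin m)) {p : Fin m → ℝ}
    (hp : ∀ j, 0 ≤ p j) :
    bestA t A p ≤ ∑ j ∈ A with 0 ≤ 1 + (t : ℝ) - p j, (1 + (t : ℝ) - p j) := by
  refine sup'_le _ _ fun T _ => ?_
  calc (1 + (t : ℝ)) * #(T ∩ A) - ∑ j ∈ T, p j ≤ ∑ j ∈ T ∩ A, (1 + (t : ℝ) - p j) := by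
        rw [sum_sub_distrib, sum_const, nsmul_eq_mul, mul_comm]
        exact sub_le_sub_left
          (sum_le_sum_of_subset_of_nonneg inter_subset_left fun j _ _ => hp j) _
    _ ≤ _ := sum_le_sum_filter_nonneg inter_subset_right _

theorem le_bestB {m : ℕ} (k t l : ℕ) (p : Fin m → ℝ) (T : Finset (Fin m)) :
    (1 + (k : ℝ) / l) * min (#T : ℝ) ((t * l : ℕ) : ℝ) - ∑ j ∈ T, p j ≤ bestB k t l p :=
  le_sup' (fun T : Finset (Fin m) => (1 + (k : ℝ) / l) * min (#T : ℝ) ((t * l : ℕ) : ℝ) -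
    ∑ j ∈ T, p j) (mem_univ T)

theorem mul_lt_card_of_bestB_le {m k t l : ℕ} {p : Fin m → ℝ} (hl : 0 < l) (htl : t * l < k)
    {T : Finset (Fin m)} (hT : T.Nonempty)
    (h : bestB k t l p ≤ (1 + (t : ℝ)) * #T - ∑ j ∈ T, p j) : t * l < #T := by
  by_contra! hle
  have hval := (le_bestB k t l p T).trans h
  rw [min_eq_left (by exact_mod_cast hle)] at hval
  have hk : (k : ℝ) / l ≤ t := by
    nlinarith [show (0 : ℝ) < #T by exact_mod_cast hT.card_pos]
  rw [div_le_iff₀ (by exact_mod_cast hl)] at hk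
  exact htl.not_ge (by exact_mod_cast hk)

theorem mul_add_mul_sub_sum_le_bestB {m k t l : ℕ} (p : Fin m → ℝ) (hl : 0 < l)
    {T : Finset (Fin m)} (hT : #T = t * l) :
    (t * l : ℝ) + t * k - ∑ j ∈ T, p j ≤ bestB k t l p := by
  convert le_bestB k t l p T using 2
  rw [hT, min_self]
  push_cast
  field_simp

-- `S = p(B)`, `b = |B|`, and `P` is the price of the `x = tℓ` cheapest items of `B`.
theorem le_of_mul_le_of_add_sub_le {t x b k S P : ℝ} (ht : 0 ≤ t) (hx : 0 ≤ x) (hxb : x < b)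
    (hbk : b ≤ k) (havg : b * P ≤ x * S) (hdev : x + t * k - P ≤ (1 + t) * b - S) : S ≤ k := by
  have hb : 0 ≤ b := hx.trans hxb.le
  refine le_of_mul_le_mul_right ?_ (sub_pos.2 hxb)
  calc S * (b - x) ≤ b * (S - P) := by linarith
    _ ≤ b * ((1 + t) * b - x - t * k) := mul_le_mul_of_nonneg_left (by linarith) hb
    _ = k * (b - x) - (k - b) * ((1 + t) * b - x) := by ring
    _ ≤ k * (b - x) := by
        have : 0 ≤ (k - b) * ((1 + t) * b - x) := by
          apply mul_nonneg <;> nlinarith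
        linarith

theorem a_type_revenue_bound_general
    (m k t l : ℕ) (ht : 0 < t) (hl : 0 < l)
    (htl : t * l < k)
    (A : Finset (Fin m)) (hA : A.card = k)
    (p : Fin m → ℝ) (hp : ∀ j, 0 ≤ p j)
    (B : Finset (Fin m)) (hB : ∀ j, j ∈ B ↔ j ∈ A ∧ p j ≤ (t : ℝ) + 1)
    (hge : bestB k t l p ≤ bestA t A p) :
    ∑ j ∈ B, p j ≤ 2 * (k : ℝ) * ((t : ℝ) + 1) / (t : ℝ) := by
  have hBA : B = {j ∈ A | 0 ≤ 1 + (t : ℝ) - p j} := by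
    ext j
    simp [hB, add_comm]
  have hbestA : bestA t A p ≤ (1 + (t : ℝ)) * #B - ∑ j ∈ B, p j := by
    have h := bestA_le_sum_filter t A hp
    rw [← hBA, sum_sub_distrib, sum_const, nsmul_eq_mul] at h
    linarith
  rcases B.eq_empty_or_nonempty with rfl | hBne
  · rw [sum_empty]
    positivity
  have hlt := mul_lt_card_of_bestB_le hl htl hBne (hge.trans hbestA)
  obtain ⟨T, -, hT, havg⟩ := B.exists_subset_card_eq_card_nsmul_sum_le p hlt.le
  have hbk : #B ≤ k := hA ▸ card_le_card (hBA ▸ filter_subset _ _)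
  have hSk : ∑ j ∈ B, p j ≤ k :=
    le_of_mul_le_of_add_sub_le t.cast_nonneg (by positivity) (by exact_mod_cast hlt)
      (by exact_mod_cast hbk) (by simpa [nsmul_eq_mul] using havg)
      ((mul_add_mul_sub_sum_le_bestB p hl hT).trans (hge.trans hbestA))
  calc ∑ j ∈ B, p j ≤ k := hSk
    _ ≤ 2 * (k : ℝ) * ((t : ℝ) + 1) / (t : ℝ) := by
        rw [le_div_iff₀ (by exact_mod_cast ht)]
        nlinarith [(k.cast_nonneg : (0 : ℝ) ≤ k), (t.cast_nonneg : (0 : ℝ) ≤ t)]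

/-- If the `A`-type utility is positive and at least the `B`-type
utility, and `k ≥ 2ℓ(t+1)`, then the total price of the items of `A` priced at most
`t + 1` (i.e. the revenue of an `A`-type purchase) is at most `2k(t+1)/t`. -/
theorem a_type_revenue_bound
    (m k t l : ℕ) (hm : 0 < m) (hk : 0 < k) (ht : 0 < t) (hl : 0 < l)
    (htl : t * l < k) (hkm : k ≤ m) (hk2 : 2 * l * (t + 1) ≤ k)
    (A : Finset (Fin m)) (hA : A.card = k)
    (p : Fin m → ℝ) (hp : ∀ j, 0 ≤ p j)
    (B : Finset (Fin m)) (hB : ∀ j, j ∈ B ↔ j ∈ A ∧ p j ≤ (t : ℝ) + 1)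
    (hpos : 0 < bestA t A p)
    (hge : bestB k t l p ≤ bestA t A p) :
    ∑ j ∈ B, p j ≤ 2 * (k : ℝ) * ((t : ℝ) + 1) / (t : ℝ) :=
  a_type_revenue_bound_general m k t l ht hl htl A hA p hp B hB hge
end

section
/- For every integer m ≥ 4 there exist a prime number ℓ with 2·ℓ ≥ ⌊√m⌋ and ℓ² ≤ m, and a family of ℓ partitions P_0, …, P_{ℓ−1} of a fixed set of ℓ² elements, each partition consisting of exactly ℓ blocks each of exactly ℓ elements, such that for all i ≠ i', every block of P_i has nonempty intersection with every block of P_{i'}. -/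
open Finset

/-- For every `m ≥ 4` there is a prime `ℓ` with `2ℓ ≥ ⌊√m⌋` and
`ℓ² ≤ m`, and a good collection of `ℓ` partitions of a set of `ℓ²` elements: each
partition has `ℓ` pairwise disjoint blocks of `ℓ` elements covering the ground set, and
any two blocks taken from two different partitions intersect. -/
theorem good_collection_exists (m : ℕ) (hm : 4 ≤ m) :
    ∃ ℓ : ℕ, Nat.Prime ℓ ∧ Nat.sqrt m ≤ 2 * ℓ ∧ ℓ ^ 2 ≤ m ∧
      ∃ P : Fin ℓ → Fin ℓ → Finset (Fin (ℓ ^ 2)),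
        (∀ (i : Fin ℓ) (j j' : Fin ℓ), j ≠ j' → Disjoint (P i j) (P i j')) ∧
        (∀ i : Fin ℓ, Finset.univ.biUnion (P i) = Finset.univ) ∧
        (∀ i j, (P i j).card = ℓ) ∧
        (∀ i i' j j', i ≠ i' → (P i j ∩ P i' j').Nonempty) := by
  set s := Nat.sqrt m with hs
  have hs2 : 2 ≤ s := by
    rw [hs]
    exact Nat.le_sqrt.mpr (by omega)
  obtain ⟨ℓ, hp, hlt, hle⟩ := Nat.exists_prime_lt_and_le_two_mul (s / 2) (by omega)
  have hls : ℓ ≤ s := by omega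
  refine ⟨ℓ, hp, by omega, ?_, ?_⟩
  · calc ℓ ^ 2 ≤ s ^ 2 := Nat.pow_le_pow_left hls 2
      _ ≤ m := by rw [hs]; exact Nat.sqrt_le' m
  haveI : Fact ℓ.Prime := ⟨hp⟩
  have hcard : Fintype.card (ZMod ℓ × ZMod ℓ) = ℓ ^ 2 := by
    simp [ZMod.card, sq]
  set E := Fintype.equivFinOfCardEq hcard with hE
  set c : Fin ℓ → ZMod ℓ := fun j => (j.val : ZMod ℓ) with hc
  have hcinj : Function.Injective c := by
    intro a b h
    have h2 : (a : ℕ) = b := by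
      have := congrArg ZMod.val h
      simpa [hc, ZMod.val_natCast_of_lt a.isLt, ZMod.val_natCast_of_lt b.isLt] using this
    exact Fin.ext h2
  have hcsurj : Function.Surjective c := by
    have : Function.Bijective c := (Fintype.bijective_iff_injective_and_card c).mpr
      ⟨hcinj, by simp [ZMod.card]⟩
    exact this.2
  refine ⟨fun i j => Finset.image (fun x : ZMod ℓ => E (x, c i * x + c j)) Finset.univ,
    ?_, ?_, ?_, ?_⟩
  · intro i j j' hjj'
    rw [Finset.disjoint_left]
    intro a ha ha'
    simp only [Finset.mem_image, Finset.mem_univ, true_and] at ha ha'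
    obtain ⟨x, hx⟩ := ha
    obtain ⟨x', hx'⟩ := ha'
    have := E.injective (hx.trans hx'.symm)
    have h1 : x = x' := congrArg Prod.fst this
    have h2 : c i * x + c j = c i * x' + c j' := congrArg Prod.snd this
    rw [h1] at h2
    exact hjj' (hcinj (add_left_cancel h2))
  · intro i
    rw [Finset.eq_univ_iff_forall]
    intro y
    obtain ⟨j, hj⟩ := hcsurj ((E.symm y).2 - c i * (E.symm y).1)
    rw [Finset.mem_biUnion]
    refine ⟨j, Finset.mem_univ _, ?_⟩
    simp only [Finset.mem_image, Finset.mem_univ, true_and]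
    refine ⟨(E.symm y).1, ?_⟩
    rw [hj]
    have : ((E.symm y).1, c i * (E.symm y).1 + ((E.symm y).2 - c i * (E.symm y).1))
        = E.symm y := by
      ext <;> simp
    rw [this, E.apply_symm_apply]
  · intro i j
    rw [Finset.card_image_of_injective _ ?_, Finset.card_univ, ZMod.card]
    intro x x' h
    exact congrArg Prod.fst (E.injective h)
  · intro i i' j j' hii'
    have hne : c i - c i' ≠ 0 := sub_ne_zero.mpr (fun h => hii' (hcinj h))
    set x : ZMod ℓ := (c j' - c j) / (c i - c i') with hx
    have hkey : (c i - c i') * x = c j' - c j := by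
      rw [hx, mul_div_cancel₀ _ hne]
    have heq : c i * x + c j = c i' * x + c j' := by linear_combination hkey
    refine ⟨E (x, c i * x + c j), ?_⟩
    rw [Finset.mem_inter]
    constructor
    · simp only [Finset.mem_image, Finset.mem_univ, true_and]
      exact ⟨x, rfl⟩
    · simp only [Finset.mem_image, Finset.mem_univ, true_and]
      exact ⟨x, by rw [← heq]⟩
end
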